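/- arXiv:1508.05233 — 11 statements merged into one kernel-verified Lean document; each statement's English description precedes it below -/
import Mathlib

section
/- Let L > 1 and let f : (0,∞) → [0,∞) satisfy |f(x) − f(y)| ≤ L·|x−y|·(1 + f(x)/x + f(y)/y) for all x, y > 0. Then for every x > 0 one has f((2L/(2L−1))·x) ≤ 2·((L/(2L−1))·x + (1 + L/(2L−1))·f(x)); consequently, setting f̂(x) := max(x, f(x)), one has f̂((2L/(2L−1))·x) ≤ ((8L−2)/(2L−1))·f̂(x) for every x > 0. -/
/-- If `L > 1` and `f : (0,∞) → [0,∞)` satisfies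
`|f(x) − f(y)| ≤ L·|x−y|·(1 + f(x)/x + f(y)/y)` for all `x, y > 0`, then for every `x > 0`
one has `f((2L/(2L−1))·x) ≤ 2·((L/(2L−1))·x + (1 + L/(2L−1))·f(x))`; consequently, with
`f̂(x) := max(x, f(x))`, one has `f̂((2L/(2L−1))·x) ≤ ((8L−2)/(2L−1))·f̂(x)` for every `x > 0`. -/
theorem stmt0 (L : ℝ) (hL : 1 < L) (f : ℝ → ℝ)
    (hf_nonneg : ∀ x : ℝ, 0 < x → 0 ≤ f x)
    (hf_mod : ∀ x y : ℝ, 0 < x → 0 < y →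
      |f x - f y| ≤ L * |x - y| * (1 + f x / x + f y / y)) :
    ∀ x : ℝ, 0 < x →
      f ((2 * L / (2 * L - 1)) * x) ≤
        2 * ((L / (2 * L - 1)) * x + (1 + L / (2 * L - 1)) * f x) ∧
      max ((2 * L / (2 * L - 1)) * x) (f ((2 * L / (2 * L - 1)) * x)) ≤
        ((8 * L - 2) / (2 * L - 1)) * max x (f x) := by
  intro x hx
  have h1 : (0:ℝ) < 2 * L - 1 := by linarith
  set y := (2 * L / (2 * L - 1)) * x with hydef
  have hy : 0 < y := by
    have : 0 < 2 * L / (2 * L - 1) := by positivity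
    exact mul_pos this hx
  have hyx : y - x = x / (2 * L - 1) := by
    rw [hydef]; field_simp; ring
  have habs : |y - x| = x / (2 * L - 1) := by
    rw [hyx, abs_of_pos (by positivity)]
  have hmod := hf_mod y x hy hx
  rw [habs] at hmod
  have key : f y - f x ≤ L * (x / (2 * L - 1)) * (1 + f y / y + f x / x) :=
    le_trans (le_abs_self _) hmod
  have hfx : f x / x * x = f x := div_mul_cancel₀ _ hx.ne'
  have hq : f y / y * x = f y * (2 * L - 1) / (2 * L) := by
    rw [hydef]
    have hLne : (2 * L) ≠ 0 := by positivity
    field_simp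
  have expand : L * (x / (2 * L - 1)) * (1 + f y / y + f x / x)
      = (L / (2 * L - 1)) * x + L / (2 * L - 1) * (f y / y * x)
        + L / (2 * L - 1) * (f x / x * x) := by ring
  rw [expand, hq, hfx] at key
  have hhalf : L / (2 * L - 1) * (f y * (2 * L - 1) / (2 * L)) = f y / 2 := by
    field_simp
    exact mul_div_cancel_left₀ _ (by linarith)
  rw [hhalf] at key
  have goal1 : f y ≤ 2 * ((L / (2 * L - 1)) * x + (1 + L / (2 * L - 1)) * f x) := by
    ring_nf at key ⊢
    linarith
  refine ⟨goal1, ?_⟩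
  set m := max x (f x) with hm
  have hxm : x ≤ m := le_max_left _ _
  have hfm : f x ≤ m := le_max_right _ _
  have step : ∀ a b : ℝ, a ≤ b → a / (2 * L - 1) ≤ b / (2 * L - 1) :=
    fun a b h => by gcongr
  apply max_le
  · calc y = (2 * L * x) / (2 * L - 1) := by rw [hydef]; ring
      _ ≤ ((8 * L - 2) * m) / (2 * L - 1) := step _ _ (by nlinarith)
      _ = ((8 * L - 2) / (2 * L - 1)) * m := by ring
  · calc f y ≤ 2 * ((L / (2 * L - 1)) * x + (1 + L / (2 * L - 1)) * f x) := goal1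
      _ = (2 * L * x + (6 * L - 2) * f x) / (2 * L - 1) := by field_simp; ring
      _ ≤ ((8 * L - 2) * m) / (2 * L - 1) := step _ _ (by nlinarith [hf_nonneg x hx])
      _ = ((8 * L - 2) / (2 * L - 1)) * m := by ring
end

section
/- Let L > 1 and let f : (0,∞) → [0,∞) satisfy |f(x) − f(y)| ≤ L·|x−y|·(1 + f(x)/x + f(y)/y) for all x, y > 0. Then for every ε > 0 and all x, y > 0 with |ln x − ln y| ≤ 2ε, one has f(y) ≥ ((1 − L·(e^{2ε} − 1))·f(x) − L·x·(e^{2ε} − 1)) / (1 + L·(e^{2ε} − 1)). -/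
/-- If `L > 1` and `f : (0,∞) → [0,∞)` satisfies
`|f(x) − f(y)| ≤ L·|x−y|·(1 + f(x)/x + f(y)/y)` for all `x, y > 0`, then for every `ε > 0`
and all `x, y > 0` with `|ln x − ln y| ≤ 2ε`, one has
`f(y) ≥ ((1 − L·(e^{2ε} − 1))·f(x) − L·x·(e^{2ε} − 1)) / (1 + L·(e^{2ε} − 1))`. -/
theorem stmt2 (L : ℝ) (hL : 1 < L) (f : ℝ → ℝ)
    (hf_nonneg : ∀ x : ℝ, 0 < x → 0 ≤ f x)
    (hf_mod : ∀ x y : ℝ, 0 < x → 0 < y →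
      |f x - f y| ≤ L * |x - y| * (1 + f x / x + f y / y)) :
    ∀ ε : ℝ, 0 < ε → ∀ x y : ℝ, 0 < x → 0 < y →
      |Real.log x - Real.log y| ≤ 2 * ε →
      ((1 - L * (Real.exp (2 * ε) - 1)) * f x - L * x * (Real.exp (2 * ε) - 1)) /
          (1 + L * (Real.exp (2 * ε) - 1)) ≤ f y := by
  intro ε hε x y hx hy hlog
  set E := Real.exp (2 * ε) with hE
  have hE1 : 1 < E := by
    rw [hE, ← Real.exp_zero]
    exact Real.exp_lt_exp.mpr (by linarith)
  set t : ℝ := E - 1 with ht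
  have ht0 : 0 < t := by simp only [ht]; linarith
  clear_value E t
  obtain ⟨h1, h2⟩ := abs_sub_le_iff.mp hlog
  have hxy : x ≤ y * E := by
    have h : Real.log x ≤ Real.log (y * E) := by
      rw [Real.log_mul hy.ne' (by positivity), hE, Real.log_exp]; linarith
    exact (Real.log_le_log_iff hx (by positivity)).mp h
  have hyx : y ≤ x * E := by
    have h : Real.log y ≤ Real.log (x * E) := by
      rw [Real.log_mul hx.ne' (by positivity), hE, Real.log_exp]; linarith
    exact (Real.log_le_log_iff hy (by positivity)).mp h
  have hAx : |x - y| ≤ x * t := by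
    rw [abs_sub_le_iff]
    refine ⟨?_, by nlinarith⟩
    nlinarith [sq_nonneg (E - 1), mul_pos hy (mul_pos ht0 ht0)]
  have hAy : |x - y| ≤ y * t := by
    rw [abs_sub_le_iff]
    refine ⟨by nlinarith, ?_⟩
    nlinarith [sq_nonneg (E - 1), mul_pos hx (mul_pos ht0 ht0)]
  have hfx := hf_nonneg x hx
  have hfy := hf_nonneg y hy
  have hL0 : (0:ℝ) < L := by linarith
  have e1 : |x - y| * (f x / x) ≤ t * f x := by
    calc |x - y| * (f x / x) ≤ (x * t) * (f x / x) :=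
          mul_le_mul_of_nonneg_right hAx (by positivity)
      _ = t * f x := by field_simp
  have e2 : |x - y| * (f y / y) ≤ t * f y := by
    calc |x - y| * (f y / y) ≤ (y * t) * (f y / y) :=
          mul_le_mul_of_nonneg_right hAy (by positivity)
      _ = t * f y := by field_simp
  have hm : f x - f y ≤ L * |x - y| + L * (|x - y| * (f x / x)) + L * (|x - y| * (f y / y)) := by
    have h := (le_abs_self (f x - f y)).trans (hf_mod x y hx hy)
    nlinarith [h]
  have key : f x - f y ≤ L * t * x + L * t * f x + L * t * f y := by
    have k1 := mul_le_mul_of_nonneg_left e1 hL0.le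
    have k2 := mul_le_mul_of_nonneg_left e2 hL0.le
    have k3 := mul_le_mul_of_nonneg_left hAx hL0.le
    linarith [hm, k1, k2, k3]
  rw [div_le_iff₀ (by positivity : (0:ℝ) < 1 + L * t)]
  nlinarith [key]
end

section
/- Let f₁, f₂ : [0,∞) → [0,∞) be convex continuous functions with f₁ ≤ f₂, and let A, β, m be defined as in the context. Then min(β, m) < ∞; moreover, if m = ∞ then A < ∞ and β < ∞. -/
/-- The right derivative `∂₊f(x)` of `f` at `x`. -/
noncomputable def rightDer (f : ℝ → ℝ) (x : ℝ) : ℝ := derivWithin f (Set.Ioi x) x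

/-- `A := inf{y > 0 : (f₂(y) − f₁(0))/y ≤ ∂₊f₂(y)}` if `f₁(0) < f₂(0)` (with `inf ∅ = ∞`),
and `A := 0` if `f₁(0) = f₂(0)`. -/
noncomputable def gameA (f₁ f₂ : ℝ → ℝ) : EReal :=
  if f₁ 0 < f₂ 0 then
    sInf ((fun y : ℝ => (y : EReal)) '' {y : ℝ | 0 < y ∧ (f₂ y - f₁ 0) / y ≤ rightDer f₂ y})
  else 0

/-- `β := (f₂(A) − f₁(0))/A` if `f₁(0) < f₂(0)` and `A < ∞`, `β := ∞` if `f₁(0) < f₂(0)` and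
`A = ∞`, and `β := ∂₊f₂(0)` if `f₁(0) = f₂(0)`. -/
noncomputable def gameBeta (f₁ f₂ : ℝ → ℝ) : EReal :=
  if f₁ 0 < f₂ 0 then
    if gameA f₁ f₂ = ⊤ then (⊤ : EReal)
    else (((f₂ ((gameA f₁ f₂).toReal) - f₁ 0) / (gameA f₁ f₂).toReal : ℝ) : EReal)
  else ((rightDer f₂ 0 : ℝ) : EReal)

/-- `ρ := inf{t ≥ 0 : ∂₊f₂(t) > m}` (with `inf ∅ = ∞`). -/
noncomputable def gameRho (f₂ : ℝ → ℝ) (m : EReal) : EReal :=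
  sInf ((fun t : ℝ => (t : EReal)) '' {t : ℝ | 0 ≤ t ∧ m < (rightDer f₂ t : EReal)})

/-- The function `g` defined by
`g(x) = (f₁(0) + βx)·1_{x<A} + f₂(x)·1_{A≤x<ρ} + (f₂(ρ) + m·(x−ρ))·1_{x≥ρ}` if `β < m`,
and `g(x) = f₁(0) + m·x` if `m ≤ β`. -/
noncomputable def gameG (f₁ f₂ : ℝ → ℝ) (m : EReal) (x : ℝ) : ℝ :=
  if gameBeta f₁ f₂ < m then
    if (x : EReal) < gameA f₁ f₂ then f₁ 0 + (gameBeta f₁ f₂).toReal * x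
    else if (x : EReal) < gameRho f₂ m then f₂ x
    else f₂ ((gameRho f₂ m).toReal) + m.toReal * (x - (gameRho f₂ m).toReal)
  else f₁ 0 + m.toReal * x

/-- The set `ℍ = ℍ(f₁,f₂)` of continuous functions `h : [0,∞) → ℝ` with `f₁ ≤ h ≤ f₂` that are
concave on every interval on which `h < f₂`. -/
def memH (f₁ f₂ h : ℝ → ℝ) : Prop :=
  ContinuousOn h (Set.Ici 0) ∧
  (∀ x ∈ Set.Ici (0 : ℝ), f₁ x ≤ h x ∧ h x ≤ f₂ x) ∧
  ∀ D : Set ℝ, D ⊆ Set.Ici 0 → D.OrdConnected → (∀ x ∈ D, h x < f₂ x) → ConcaveOn ℝ D h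

section Aux
open Set Filter

private lemma convexOn_diffWithinAt_Ioi {f : ℝ → ℝ} (hf : ConvexOn ℝ (Set.Ici 0) f) {x : ℝ} (hx : 0 < x) :
    DifferentiableWithinAt ℝ f (Set.Ioi x) x := by
  have hx' : x ∈ Set.Ici (0:ℝ) := hx.le
  have hmono : MonotoneOn (slope f x) (Set.Ioi x) :=
    (hf.slope_mono hx').mono (fun y hy => ⟨(hx.trans hy).le, by simp [(show x < y from hy).ne']⟩)
  have hbdd : BddBelow (slope f x '' Set.Ioi x) := by
    refine ⟨slope f x (x/2), ?_⟩
    rintro _ ⟨y, hy, rfl⟩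
    exact (hf.slope_mono hx') ⟨(half_pos hx).le, by simp [(half_lt_self hx).ne]⟩
      ⟨(hx.trans hy).le, by simp [(show x < y from hy).ne']⟩ ((half_lt_self hx).le.trans (le_of_lt hy))
  have := hmono.tendsto_nhdsGT hbdd
  exact ((hasDerivWithinAt_iff_tendsto_slope' notMem_Ioi_self).mpr this).differentiableWithinAt

private lemma slope_le_rightDer {f : ℝ → ℝ} (hf : ConvexOn ℝ (Set.Ici 0) f) {w x : ℝ}
    (hw : 0 ≤ w) (hwx : w < x) : (f x - f w) / (x - w) ≤ rightDer f x := by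
  have hx : 0 < x := lt_of_le_of_lt hw hwx
  have hd := (convexOn_diffWithinAt_Ioi hf hx).hasDerivWithinAt
  have ht := (hasDerivWithinAt_iff_tendsto_slope' notMem_Ioi_self).mp hd
  have hev : ∀ y ∈ Set.Ioi x, slope f x w ≤ slope f x y := fun y hy =>
    (hf.slope_mono hx.le) ⟨hw, by simp [hwx.ne]⟩ ⟨(hx.trans hy).le, by simp [(show x < y from hy).ne']⟩
      (hwx.le.trans (le_of_lt hy))
  have := ge_of_tendsto ht (eventually_nhdsWithin_of_forall hev)
  calc (f x - f w) / (x - w) = slope f x w := by rw [slope_comm, slope_def_field]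
  _ ≤ rightDer f x := this

private lemma rightDer_le_slope {f : ℝ → ℝ} (hf : ConvexOn ℝ (Set.Ici 0) f) {x y : ℝ}
    (hx : 0 < x) (hxy : x < y) : rightDer f x ≤ (f y - f x) / (y - x) := by
  have := hf.rightDeriv_le_slope hx.le (hx.trans hxy).le hxy (convexOn_diffWithinAt_Ioi hf hx)
  rwa [slope_def_field] at this

private lemma exists_good_point {f₁ f₂ : ℝ → ℝ}
    (hf₁conv : ConvexOn ℝ (Set.Ici 0) f₁) (hf₂conv : ConvexOn ℝ (Set.Ici 0) f₂)
    (hle : ∀ x ∈ Set.Ici (0 : ℝ), f₁ x ≤ f₂ x)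
    (hm : Filter.Tendsto (fun t : ℝ => ((rightDer f₁ t : ℝ) : EReal)) Filter.atTop (nhds ⊤)) :
    ∃ y : ℝ, 0 < y ∧ (f₂ y - f₁ 0) / y ≤ rightDer f₂ y := by
  set C : ℝ := f₂ 1 - f₁ 0 with hC
  set K : ℝ := max C 0 + 1 with hK
  have hKC : C + 1 ≤ K := by
    have := le_max_left C (0:ℝ); simp only [hK]; linarith
  have hev : ∀ᶠ t : ℝ in atTop, (K : EReal) < ((rightDer f₁ t : ℝ) : EReal) :=
    hm.eventually_const_lt (by exact EReal.coe_lt_top K)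
  obtain ⟨t₀, ht₀K, ht₀1⟩ := (hev.and (eventually_ge_atTop (1:ℝ))).exists
  have hKt₀ : K < rightDer f₁ t₀ := by exact_mod_cast ht₀K
  have ht₀pos : (0:ℝ) < t₀ := lt_of_lt_of_le one_pos ht₀1
  set y : ℝ := max (t₀ + 1) (f₁ 0 - f₁ t₀ + K * t₀) with hy
  have hyt₀ : t₀ < y := lt_of_lt_of_le (by linarith) (le_max_left _ _)
  have hy1 : 1 < y := by
    have : t₀ + 1 ≤ y := le_max_left _ _
    linarith
  have hypos : 0 < y := lt_trans one_pos hy1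
  -- superlinear growth of f₁
  have hslope : K ≤ (f₁ y - f₁ t₀) / (y - t₀) :=
    le_trans hKt₀.le (rightDer_le_slope hf₁conv ht₀pos hyt₀)
  have hgrow : f₁ t₀ + K * (y - t₀) ≤ f₁ y := by
    have h1 : 0 < y - t₀ := by linarith
    nlinarith [(le_div_iff₀ h1).mp hslope]
  -- hence f₂ y is at least C*y + f₁ 0
  have hf2y : C * y + f₁ 0 ≤ f₂ y := by
    have h12 : f₁ y ≤ f₂ y := hle y hypos.le
    have hyb : f₁ 0 - f₁ t₀ + K * t₀ ≤ y := le_max_right _ _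
    have hKC' : C + 1 ≤ K := hKC
    nlinarith
  refine ⟨y, hypos, ?_⟩
  have hRD : (f₂ y - f₂ 1) / (y - 1) ≤ rightDer f₂ y :=
    slope_le_rightDer hf₂conv (by norm_num) hy1
  refine le_trans ?_ hRD
  rw [div_le_div_iff₀ hypos (by linarith : (0:ℝ) < y - 1)]
  nlinarith


end Aux

/-- For convex continuous `f₁ ≤ f₂ : [0,∞) → [0,∞)` and `A, β, m` as above,
one has `min(β, m) < ∞`; moreover, if `m = ∞` then `A < ∞` and `β < ∞`. -/

theorem stmt4 (f₁ f₂ : ℝ → ℝ)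
    (hf₁conv : ConvexOn ℝ (Set.Ici 0) f₁) (hf₂conv : ConvexOn ℝ (Set.Ici 0) f₂)
    (hf₁cont : ContinuousOn f₁ (Set.Ici 0)) (hf₂cont : ContinuousOn f₂ (Set.Ici 0))
    (hf₁nonneg : ∀ x ∈ Set.Ici (0 : ℝ), 0 ≤ f₁ x) (hf₂nonneg : ∀ x ∈ Set.Ici (0 : ℝ), 0 ≤ f₂ x)
    (hle : ∀ x ∈ Set.Ici (0 : ℝ), f₁ x ≤ f₂ x)
    (m : EReal) (hm_ne_bot : m ≠ ⊥)
    (hm : Filter.Tendsto (fun t : ℝ => ((rightDer f₁ t : ℝ) : EReal)) Filter.atTop (nhds m)) :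
    min (gameBeta f₁ f₂) m < ⊤ ∧
      (m = ⊤ → gameA f₁ f₂ < ⊤ ∧ gameBeta f₁ f₂ < ⊤) := by
  have key : m = ⊤ → gameA f₁ f₂ < ⊤ ∧ gameBeta f₁ f₂ < ⊤ := by
    intro hmt
    subst hmt
    have hA : gameA f₁ f₂ < ⊤ := by
      unfold gameA
      split_ifs with h0
      · obtain ⟨y, hy, hcond⟩ := exists_good_point hf₁conv hf₂conv hle hm
        exact lt_of_le_of_lt (sInf_le ⟨y, ⟨hy, hcond⟩, rfl⟩) (EReal.coe_lt_top y)
      · exact (by simp : (0:EReal) < ⊤)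
    refine ⟨hA, ?_⟩
    unfold gameBeta
    split_ifs with h0 hAtop
    · exact absurd hAtop hA.ne
    · exact EReal.coe_lt_top _
    · exact EReal.coe_lt_top _
  refine ⟨?_, key⟩
  rcases eq_or_ne m ⊤ with hmt | hmt
  · exact lt_of_le_of_lt (min_le_left _ _) ((key hmt).2)
  · exact lt_of_le_of_lt (min_le_right _ _) (lt_top_iff_ne_top.mpr hmt)
end

section
/- Let f₁, f₂ : [0,∞) → [0,∞) be convex continuous functions with f₁ ≤ f₂, let A, β, m, ρ and g be defined as in the context, and assume min(β, m) < ∞. Then sup_{t≥0} ∂₊g(t) ≤ m, i.e. the right derivative of g is at most m at every point. -/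
lemma rightDer_affine (c a t : ℝ) : rightDer (fun x => c + a * x) t = a := by
  have h : HasDerivWithinAt (fun x => c + a * x) a (Set.Ioi t) t := by
    simpa using (((hasDerivAt_id t).const_mul a).const_add c).hasDerivWithinAt
  exact h.derivWithin (uniqueDiffWithinAt_Ioi t)

lemma rightDer_congr {f g : ℝ → ℝ} {t : ℝ}
    (h : f =ᶠ[nhdsWithin t (Set.Ioi t)] g) (hpt : f t = g t) :
    rightDer f t = rightDer g t := h.derivWithin_eq hpt

lemma toReal_le_self' {m : EReal} (h : m ≠ ⊥) : (m.toReal : EReal) ≤ m := by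
  induction m using EReal.rec with
  | bot => simp at h
  | coe r => simp
  | top => simp

lemma eventually_lt_coe {c : EReal} {t : ℝ} (h : (t : EReal) < c) :
    ∀ᶠ x : ℝ in nhdsWithin t (Set.Ioi t), (x : EReal) < c := by
  by_cases hc : c = ⊤
  · subst hc
    exact Filter.Eventually.of_forall (fun x => EReal.coe_lt_top x)
  · have hb : c ≠ ⊥ := fun hb => by simp [hb] at h
    have hcc : c = ((c.toReal : ℝ) : EReal) := (EReal.coe_toReal hc hb).symm
    have htr : t < c.toReal := by
      rw [hcc] at h; exact_mod_cast h
    filter_upwards [Ioo_mem_nhdsGT_of_mem ⟨le_refl t, htr⟩] with x hx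
    rw [hcc]; exact_mod_cast hx.2

/-- For convex continuous `f₁ ≤ f₂ : [0,∞) → [0,∞)` with `min(β, m) < ∞`, one
has `sup_{t≥0} ∂₊g(t) ≤ m`, i.e. the right derivative of `g` is at most `m` at every point. -/
theorem stmt7 (f₁ f₂ : ℝ → ℝ)
    (hf₁conv : ConvexOn ℝ (Set.Ici 0) f₁) (hf₂conv : ConvexOn ℝ (Set.Ici 0) f₂)
    (hf₁cont : ContinuousOn f₁ (Set.Ici 0)) (hf₂cont : ContinuousOn f₂ (Set.Ici 0))
    (hf₁nonneg : ∀ x ∈ Set.Ici (0 : ℝ), 0 ≤ f₁ x) (hf₂nonneg : ∀ x ∈ Set.Ici (0 : ℝ), 0 ≤ f₂ x)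
    (hle : ∀ x ∈ Set.Ici (0 : ℝ), f₁ x ≤ f₂ x)
    (m : EReal) (hm_ne_bot : m ≠ ⊥)
    (hm : Filter.Tendsto (fun t : ℝ => ((rightDer f₁ t : ℝ) : EReal)) Filter.atTop (nhds m))
    (hmin : min (gameBeta f₁ f₂) m < ⊤) :
    ∀ t : ℝ, 0 ≤ t → ((rightDer (gameG f₁ f₂ m) t : ℝ) : EReal) ≤ m := by
  intro t ht
  by_cases hβm : gameBeta f₁ f₂ < m
  · have hβ_ne_bot : gameBeta f₁ f₂ ≠ ⊥ := by
      unfold gameBeta; split_ifs <;> simp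
    have hβ_ne_top : gameBeta f₁ f₂ ≠ ⊤ := (hβm.trans_le le_top).ne
    set b := (gameBeta f₁ f₂).toReal with hb
    have hβb : gameBeta f₁ f₂ = (b : EReal) := (EReal.coe_toReal hβ_ne_top hβ_ne_bot).symm
    by_cases htA : (t : EReal) < gameA f₁ f₂
    · have heq : (fun x => f₁ 0 + b * x) =ᶠ[nhdsWithin t (Set.Ioi t)] gameG f₁ f₂ m := by
        filter_upwards [eventually_lt_coe htA] with x hxA
        simp only [gameG, if_pos hβm, if_pos hxA, ← hb]
      have hpt : f₁ 0 + b * t = gameG f₁ f₂ m t := by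
        simp only [gameG, if_pos hβm, if_pos htA, ← hb]
      have hkey : rightDer (gameG f₁ f₂ m) t = b := by
        rw [← rightDer_congr heq hpt, rightDer_affine]
      rw [hkey, ← hβb]
      exact hβm.le
    · have hAt : gameA f₁ f₂ ≤ (t : EReal) := not_lt.mp htA
      by_cases htρ : (t : EReal) < gameRho f₂ m
      · have heq : gameG f₁ f₂ m =ᶠ[nhdsWithin t (Set.Ioi t)] f₂ := by
          filter_upwards [eventually_lt_coe htρ, self_mem_nhdsWithin] with x hxρ hxt
          have hxA : ¬ ((x : EReal) < gameA f₁ f₂) :=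
            not_lt.mpr (hAt.trans (by exact_mod_cast (le_of_lt hxt)))
          simp only [gameG, if_pos hβm, if_neg hxA, if_pos hxρ]
        have hpt : gameG f₁ f₂ m t = f₂ t := by
          simp only [gameG, if_pos hβm, if_neg htA, if_pos htρ]
        rw [show rightDer (gameG f₁ f₂ m) t = rightDer f₂ t from rightDer_congr heq hpt]
        by_contra hcon
        push_neg at hcon
        have hmem : (t : EReal) ∈ (fun s : ℝ => (s : EReal)) ''
            {s : ℝ | 0 ≤ s ∧ m < (rightDer f₂ s : EReal)} := ⟨t, ⟨ht, hcon⟩, rfl⟩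
        have : gameRho f₂ m ≤ (t : EReal) := by
          unfold gameRho; exact sInf_le hmem
        exact absurd htρ (not_lt.mpr this)
      · have hρt : gameRho f₂ m ≤ (t : EReal) := not_lt.mp htρ
        set r := (gameRho f₂ m).toReal with hr
        have heq : (fun x => (f₂ r - m.toReal * r) + m.toReal * x)
            =ᶠ[nhdsWithin t (Set.Ioi t)] gameG f₁ f₂ m := by
          filter_upwards [self_mem_nhdsWithin] with x hxt
          have hxt' : (t : EReal) ≤ (x : EReal) := by exact_mod_cast (le_of_lt hxt)
          have hxA : ¬ ((x : EReal) < gameA f₁ f₂) := not_lt.mpr (hAt.trans hxt')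
          have hxρ : ¬ ((x : EReal) < gameRho f₂ m) := not_lt.mpr (hρt.trans hxt')
          simp only [gameG, if_pos hβm, if_neg hxA, if_neg hxρ, ← hr]
          ring
        have hpt : (f₂ r - m.toReal * r) + m.toReal * t = gameG f₁ f₂ m t := by
          simp only [gameG, if_pos hβm, if_neg htA, if_neg htρ, ← hr]
          ring
        have hkey : rightDer (gameG f₁ f₂ m) t = m.toReal := by
          rw [← rightDer_congr heq hpt, rightDer_affine]
        rw [hkey]
        exact toReal_le_self' hm_ne_bot
  · have hg : gameG f₁ f₂ m = fun x => f₁ 0 + m.toReal * x := by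
      funext x; simp only [gameG, if_neg hβm]
    rw [hg, rightDer_affine]
    exact toReal_le_self' hm_ne_bot
end

section
/- Let f : [0,∞) → ℝ be convex and assume m := lim_{t→∞} ∂₊f(t) is finite. Let y ≥ 0 and let h : (y,∞) → ℝ be a concave function with h(t) ≥ f(t) for all t > y. Then ∂₊h(t) ≥ m for every t > y. -/
open Set Filter

/-- A convex function on a set containing `[x,∞)` and a point `a < x` has a right derivative
at `x`. -/
lemma aux_convex_right_diff {S : Set ℝ} {f : ℝ → ℝ} {a x : ℝ}
    (hf : ConvexOn ℝ S f) (ha : a ∈ S) (hax : a < x) (hx : Ici x ⊆ S) :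
    ∃ f', HasDerivWithinAt f f' (Ioi x) x := by
  have hxS : x ∈ S := hx self_mem_Ici
  have mono : MonotoneOn (slope f x) (Ioi x) := fun u hu v hv huv =>
    hf.slope_mono hxS ⟨hx (mem_Ici.mpr (mem_Ioi.mp hu).le), (ne_of_gt hu)⟩ ⟨hx (mem_Ici.mpr (mem_Ioi.mp hv).le), (ne_of_gt hv)⟩ huv
  have bdd : BddBelow (slope f x '' Ioi x) := by
    refine ⟨slope f x a, ?_⟩
    rintro _ ⟨u, hu, rfl⟩
    exact hf.slope_mono hxS ⟨ha, hax.ne⟩ ⟨hx (mem_Ici.mpr (mem_Ioi.mp hu).le), (ne_of_gt hu)⟩ (hax.le.trans hu.le)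
  exact ⟨_, (hasDerivWithinAt_iff_tendsto_slope' self_notMem_Ioi).mpr
    (mono.tendsto_nhdsGT bdd)⟩

/-- Let `f : [0,∞) → ℝ` be convex with `m := lim_{t→∞} ∂₊f(t)` finite. Let
`y ≥ 0` and `h : (y,∞) → ℝ` concave with `h ≥ f` on `(y,∞)`. Then `∂₊h(t) ≥ m` for `t > y`. -/
theorem stmt8 (f : ℝ → ℝ) (hconv : ConvexOn ℝ (Set.Ici 0) f)
    (m : ℝ) (hm : Filter.Tendsto (fun t : ℝ => rightDer f t) Filter.atTop (nhds m))
    (y : ℝ) (hy : 0 ≤ y) (h : ℝ → ℝ) (hconc : ConcaveOn ℝ (Set.Ioi y) h)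
    (hfh : ∀ t : ℝ, y < t → f t ≤ h t) :
    ∀ t : ℝ, y < t → m ≤ rightDer h t := by
  intro t ht
  by_contra hlt
  push_neg at hlt
  set c := rightDer h t with hc
  -- h is right-differentiable at t
  obtain ⟨a, hya, hat⟩ : ∃ a, y < a ∧ a < t := ⟨(y + t) / 2, by linarith, by linarith⟩
  obtain ⟨h', hh'⟩ := aux_convex_right_diff (f := fun x => -h x) (a := a) (x := t)
    hconc.neg hya hat (fun u hu => lt_of_lt_of_le ht hu)
  have hhdiff : DifferentiableWithinAt ℝ h (Ioi t) t := by
    have := hh'.neg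
    simpa using this.differentiableWithinAt
  -- choose s₀ > max t 0 with c < rightDer f s₀
  have hev : ∀ᶠ s₀ in atTop, c < rightDer f s₀ ∧ max t 0 < s₀ :=
    (hm.eventually (eventually_gt_nhds hlt)).and (eventually_gt_atTop _)
  obtain ⟨s₀, hcs₀, hs₀⟩ := hev.exists
  have hts₀ : t < s₀ := lt_of_le_of_lt (le_max_left _ _) hs₀
  have h0s₀ : (0:ℝ) < s₀ := lt_of_le_of_lt (le_max_right _ _) hs₀
  set d := rightDer f s₀ with hd
  -- f is right-differentiable at s₀
  obtain ⟨f', hf'⟩ := aux_convex_right_diff (f := f) (a := 0) (x := s₀)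
    hconv self_mem_Ici h0s₀ (fun u hu => le_trans h0s₀.le hu)
  have hfdiff : DifferentiableWithinAt ℝ f (Ioi s₀) s₀ := hf'.differentiableWithinAt
  have hdc : c < d := hcs₀
  -- key inequalities for s > s₀
  have key : ∀ s : ℝ, s₀ < s → d * (s - s₀) + f s₀ ≤ c * (s - t) + h t := by
    intro s hs
    have hslopef : d ≤ slope f s₀ s :=
      hconv.rightDeriv_le_slope h0s₀.le (h0s₀.le.trans hs.le) hs hfdiff
    have hslopeh : slope h t s ≤ c :=
      hconc.slope_le_rightDeriv ht (ht.trans (hts₀.trans hs)) (hts₀.trans hs) hhdiff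
    rw [slope_def_field] at hslopef hslopeh
    have hss : (0:ℝ) < s - s₀ := by linarith
    have hst : (0:ℝ) < s - t := by linarith
    have h1 : d * (s - s₀) ≤ f s - f s₀ := (le_div_iff₀ hss).mp hslopef
    have h2 : h s - h t ≤ c * (s - t) := (div_le_iff₀ hst).mp hslopeh
    have h3 : f s ≤ h s := hfh s (by linarith)
    linarith
  -- take s large enough to get a contradiction
  set C := (h t - c * t) - (f s₀ - d * s₀) with hC
  have hdc' : (0:ℝ) < d - c := by linarith
  set s := max (s₀ + 1) ((C + 1) / (d - c)) with hs
  have hss₀ : s₀ < s := lt_of_lt_of_le (by linarith) (le_max_left _ _)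
  have h4 := key s hss₀
  have h5 : C + 1 ≤ (d - c) * s := by
    rw [← div_le_iff₀' hdc']
    exact le_max_right _ _
  nlinarith [h4, h5]
end

section
/- Let f₁, f₂ : [0,∞) → [0,∞) be convex continuous functions with f₁ ≤ f₂ and let g denote the minimal element of ℍ. Suppose at least one of the following holds: (i) f₂ = f₁ + Δ for some constant Δ > 0; (ii) sup_{t>0} ∂₊f₂(t) = 0; (iii) sup_{t>0} ∂₊f₁(t) = ∞. Then for every x₀ > 0 with g(x₀) < f₂(x₀), one has g(x₀) − x₀·∂₊g(x₀) ≥ 0. -/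
open Set Filter Topology

/-- Slopes from a moving left base point tend to the slope from the endpoint. -/
lemma tendsto_slope_left' {g : ℝ → ℝ} (hgc : ContinuousOn g (Set.Ici 0)) {a c : ℝ}
    (ha : 0 ≤ a) (hac : a < c) :
    Tendsto (fun u => (g c - g u) / (c - u)) (𝓝[>] a) (𝓝 ((g c - g a) / (c - a))) := by
  have hg : Tendsto g (𝓝[>] a) (𝓝 (g a)) :=
    (hgc a ha).mono_left (nhdsWithin_mono _ (fun x hx => ha.trans (le_of_lt hx)))
  have hid : Tendsto (fun u : ℝ => u) (𝓝[>] a) (𝓝 a) :=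
    tendsto_id.mono_left nhdsWithin_le_nhds
  exact (tendsto_const_nhds.sub hg).div (tendsto_const_nhds.sub hid) (sub_ne_zero.2 hac.ne')

/-- Slopes to a moving right point tend to the slope to the endpoint. -/
lemma tendsto_slope_right' {g : ℝ → ℝ} (hgc : ContinuousOn g (Set.Ici 0)) {a b : ℝ}
    (hb : 0 < b) (hab : a < b) :
    Tendsto (fun y => (g y - g a) / (y - a)) (𝓝[<] b) (𝓝 ((g b - g a) / (b - a))) := by
  have hg : Tendsto g (𝓝[<] b) (𝓝 (g b)) :=
    ((hgc.continuousAt (Ici_mem_nhds hb)).tendsto).mono_left nhdsWithin_le_nhds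
  have hid : Tendsto (fun u : ℝ => u) (𝓝[<] b) (𝓝 b) :=
    tendsto_id.mono_left nhdsWithin_le_nhds
  exact (hg.sub tendsto_const_nhds).div (hid.sub tendsto_const_nhds) (sub_ne_zero.2 hab.ne')

/-- Secant slopes of a concave function from the (limit) left endpoint are antitone. -/
lemma concave_slope_anti_endpoint {g : ℝ → ℝ} {a c x y : ℝ}
    (hgc : ContinuousOn g (Set.Ici 0)) (ha : 0 ≤ a)
    (hconc : ConcaveOn ℝ (Set.Ioo a c) g) (hx : a < x) (hxy : x < y) (hyc : y < c) :
    (g y - g a) / (y - a) ≤ (g x - g a) / (x - a) := by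
  have h1 := tendsto_slope_left' hgc ha (hx.trans hxy)
  have h2 := tendsto_slope_left' hgc ha hx
  refine le_of_tendsto_of_tendsto h1 h2 ?_
  filter_upwards [Ioo_mem_nhdsGT_of_mem (⟨le_refl a, hx⟩ : a ∈ Set.Ico a x)] with u hu
  have hxm : x ∈ Set.Ioo a c := ⟨hx, hxy.trans hyc⟩
  have hym : y ∈ Set.Ioo a c := ⟨hx.trans hxy, hyc⟩
  have hum : u ∈ Set.Ioo a c := ⟨hu.1, hu.2.trans hxm.2⟩
  have := hconc.neg.secant_mono hum hxm hym hu.2.ne' (hu.2.trans hxy).ne' hxy.le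
  simp only [Pi.neg_apply] at this
  have h3 : (g u - g x) / (x - u) ≤ (g u - g y) / (y - u) := by
    rw [show g u - g x = -g x - -g u by ring, show g u - g y = -g y - -g u by ring]
    exact this
  have h4 := neg_le_neg h3
  rw [← neg_div, ← neg_div] at h4
  simpa [neg_sub] using h4

/-- A convex function on `[0,∞)` has a right derivative at every interior point. -/
lemma convexOn_hasDerivWithinAt_Ioi {f : ℝ → ℝ} (hf : ConvexOn ℝ (Set.Ici 0) f) {x : ℝ}
    (hx : 0 < x) : HasDerivWithinAt f (rightDer f x) (Set.Ioi x) x := by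
  have hxm : x ∈ Set.Ici (0 : ℝ) := hx.le
  have hsub : Set.Ioi x ⊆ Set.Ici 0 \ {x} :=
    fun y hy => ⟨(hx.trans hy).le, (ne_of_gt hy)⟩
  have hmono : MonotoneOn (slope f x) (Set.Ioi x) := (hf.slope_mono hxm).mono hsub
  have h0m : (0 : ℝ) ∈ Set.Ici 0 \ {x} := ⟨Set.self_mem_Ici, (ne_of_lt hx)⟩
  have hbdd : BddBelow (slope f x '' Set.Ioi x) := by
    refine ⟨slope f x 0, ?_⟩
    rintro _ ⟨y, hy, rfl⟩
    exact (hf.slope_mono hxm) h0m (hsub hy) ((hx.trans hy).le)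
  have ht : Tendsto (slope f x) (𝓝[>] x) (𝓝 (sInf (slope f x '' Set.Ioi x))) :=
    hmono.tendsto_nhdsGT hbdd
  have hd : HasDerivWithinAt f (sInf (slope f x '' Set.Ioi x)) (Set.Ioi x) x :=
    (hasDerivWithinAt_iff_tendsto_slope' notMem_Ioi_self).mpr ht
  have heq : rightDer f x = sInf (slope f x '' Set.Ioi x) :=
    hd.derivWithin (uniqueDiffWithinAt_Ioi x)
  rw [heq]
  exact hd

/-- Let `f₁ ≤ f₂ : [0,∞) → [0,∞)` be convex continuous and `g` the minimal
element of `ℍ`. If (i) `f₂ = f₁ + Δ` for a constant `Δ > 0`, or (ii) `sup_{t>0} ∂₊f₂(t) = 0`,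
or (iii) `sup_{t>0} ∂₊f₁(t) = ∞`, then `g(x₀) − x₀·∂₊g(x₀) ≥ 0` for every `x₀ > 0` with
`g(x₀) < f₂(x₀)`. -/
theorem stmt11 (f₁ f₂ g : ℝ → ℝ)
    (hf₁conv : ConvexOn ℝ (Set.Ici 0) f₁) (hf₂conv : ConvexOn ℝ (Set.Ici 0) f₂)
    (hf₁cont : ContinuousOn f₁ (Set.Ici 0)) (hf₂cont : ContinuousOn f₂ (Set.Ici 0))
    (hf₁nonneg : ∀ x ∈ Set.Ici (0 : ℝ), 0 ≤ f₁ x) (hf₂nonneg : ∀ x ∈ Set.Ici (0 : ℝ), 0 ≤ f₂ x)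
    (hle : ∀ x ∈ Set.Ici (0 : ℝ), f₁ x ≤ f₂ x)
    (hgH : memH f₁ f₂ g)
    (hgmin : ∀ h : ℝ → ℝ, memH f₁ f₂ h → ∀ x ∈ Set.Ici (0 : ℝ), g x ≤ h x)
    (hcond :
      (∃ Δ : ℝ, 0 < Δ ∧ ∀ x ∈ Set.Ici (0 : ℝ), f₂ x = f₁ x + Δ) ∨
      (⨆ t : Set.Ioi (0 : ℝ), ((rightDer f₂ t : ℝ) : EReal)) = 0 ∨
      (⨆ t : Set.Ioi (0 : ℝ), ((rightDer f₁ t : ℝ) : EReal)) = ⊤) :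
    ∀ x₀ : ℝ, 0 < x₀ → g x₀ < f₂ x₀ → 0 ≤ g x₀ - x₀ * rightDer g x₀ := by
  obtain ⟨hgcont, hgbetween, hgconc⟩ := hgH
  intro x₀ hx₀ hlt
  rcases le_or_gt (rightDer g x₀) 0 with hs | hs
  · have h1 := (hgbetween x₀ hx₀.le).1
    have h0 := hf₁nonneg x₀ hx₀.le
    nlinarith
  set s := rightDer g x₀ with hsdef
  -- s > 0 : g is right-differentiable at x₀
  have hdiffg : DifferentiableWithinAt ℝ g (Set.Ioi x₀) x₀ := by
    by_contra h
    rw [hsdef] at hs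
    simp only [rightDer] at hs
    rw [derivWithin_zero_of_not_differentiableWithinAt h] at hs
    exact lt_irrefl 0 hs
  have hder : HasDerivWithinAt g s (Set.Ioi x₀) x₀ := hdiffg.hasDerivWithinAt
  have htend : Tendsto (slope g x₀) (𝓝[>] x₀) (𝓝 s) :=
    (hasDerivWithinAt_iff_tendsto_slope' notMem_Ioi_self).mp hder
  -- g < f₂ in a right neighborhood of x₀
  have hcg : ContinuousAt g x₀ := hgcont.continuousAt (Ici_mem_nhds hx₀)
  have hcf₂ : ContinuousAt f₂ x₀ := hf₂cont.continuousAt (Ici_mem_nhds hx₀)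
  have hev : ∀ᶠ y in 𝓝 x₀, g y < f₂ y := by
    have h1 : Tendsto (fun y => f₂ y - g y) (𝓝 x₀) (𝓝 (f₂ x₀ - g x₀)) := hcf₂.sub hcg
    have h2 := h1.eventually (eventually_gt_nhds (sub_pos.2 hlt))
    filter_upwards [h2] with y hy using sub_pos.1 hy
  obtain ⟨ε, hε, hball⟩ := Metric.eventually_nhds_iff.mp hev
  set c := x₀ + ε with hcdef
  have hc : x₀ < c := by simp [hcdef, hε]
  have hnear : ∀ y, x₀ ≤ y → y < c → g y < f₂ y := by
    intro y h1 h2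
    refine hball ?_
    rw [Real.dist_eq, abs_lt]
    constructor
    · simp only [hcdef] at h2; linarith
    · simp only [hcdef] at h2; linarith
  -- the last contact point `a` below x₀
  set A := insert (0 : ℝ) {x ∈ Set.Icc 0 x₀ | f₂ x ≤ g x} with hAdef
  have hAne : A.Nonempty := ⟨0, mem_insert _ _⟩
  have hAbdd : BddAbove A := by
    refine ⟨x₀, ?_⟩
    rintro t (rfl | ⟨⟨_, h2⟩, _⟩)
    · exact hx₀.le
    · exact h2
  have hAclosed : IsClosed A := by
    have h1 : ContinuousOn (fun x => g x - f₂ x) (Set.Icc 0 x₀) :=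
      (hgcont.mono Icc_subset_Ici_self).sub (hf₂cont.mono Icc_subset_Ici_self)
    have h2 : IsClosed (Set.Icc 0 x₀ ∩ (fun x => g x - f₂ x) ⁻¹' Set.Ici 0) :=
      h1.preimage_isClosed_of_isClosed isClosed_Icc isClosed_Ici
    have h3 : A = {0} ∪ (Set.Icc 0 x₀ ∩ (fun x => g x - f₂ x) ⁻¹' Set.Ici 0) := by
      ext t
      simp only [hAdef, Set.mem_insert_iff, Set.mem_setOf_eq, Set.mem_union,
        Set.mem_singleton_iff, Set.mem_inter_iff, Set.mem_preimage, Set.mem_Ici]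
      constructor
      · rintro (rfl | ⟨h1', h2'⟩)
        · exact Or.inl rfl
        · exact Or.inr ⟨h1', by linarith⟩
      · rintro (rfl | ⟨h1', h2'⟩)
        · exact Or.inl rfl
        · exact Or.inr ⟨h1', by linarith⟩
    rw [h3]
    exact isClosed_singleton.union h2
  set a := sSup A with hadef
  have haA : a ∈ A := hAclosed.csSup_mem hAne hAbdd
  have ha0 : 0 ≤ a := le_csSup hAbdd (mem_insert _ _)
  have hax₀ : a < x₀ := by
    have hle' : a ≤ x₀ := by
      refine csSup_le hAne ?_
      rintro t (rfl | ⟨⟨_, h2⟩, _⟩)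
      · exact hx₀.le
      · exact h2
    rcases lt_or_eq_of_le hle' with h | h
    · exact h
    · exfalso
      rw [h] at haA
      rcases haA with h' | ⟨_, h2'⟩
      · exact hx₀.ne' h'
      · exact absurd h2' (not_le.2 hlt)
  have hAprop : ∀ x, a < x → x ≤ x₀ → g x < f₂ x := by
    intro x h1 h2
    by_contra h
    push_neg at h
    have hxA : x ∈ A := Or.inr ⟨⟨ha0.trans h1.le, h2⟩, h⟩
    exact absurd (le_csSup hAbdd hxA) (not_le.2 h1)
  -- concavity on Ioo a c
  have hsub1 : Set.Ioo a c ⊆ Set.Ici 0 := fun y hy => ha0.trans hy.1.le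
  have hlt1 : ∀ y ∈ Set.Ioo a c, g y < f₂ y := by
    intro y hy
    rcases le_or_gt y x₀ with h | h
    · exact hAprop y hy.1 h
    · exact hnear y h.le hy.2
  have hconc1 : ConcaveOn ℝ (Set.Ioo a c) g := hgconc _ hsub1 Set.ordConnected_Ioo hlt1
  -- the tangent-slope bound to the left of x₀
  have hdag : ∀ u ∈ Set.Ioo a x₀, s ≤ (g x₀ - g u) / (x₀ - u) := by
    intro u hu
    refine le_of_tendsto htend ?_
    filter_upwards [Ioo_mem_nhdsGT_of_mem (⟨le_refl x₀, hc⟩ : x₀ ∈ Set.Ico x₀ c)] with y hy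
    have hum : u ∈ Set.Ioo a c := ⟨hu.1, hu.2.trans hc⟩
    have hym : y ∈ Set.Ioo a c := ⟨hu.1.trans (hu.2.trans hy.1), hy.2⟩
    have h3 := hconc1.slope_anti_adjacent hum hym hu.2 hy.1
    rw [slope_def_field]
    exact h3
  have hF1 : s ≤ (g x₀ - g a) / (x₀ - a) := by
    refine ge_of_tendsto (tendsto_slope_left' hgcont ha0 hax₀) ?_
    filter_upwards [Ioo_mem_nhdsGT_of_mem (⟨le_refl a, hax₀⟩ : a ∈ Set.Ico a x₀)] with u hu
      using hdag u hu
  have hxa : (0 : ℝ) < x₀ - a := by linarith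
  have hsx : s * (x₀ - a) ≤ g x₀ - g a := by
    have := (le_div_iff₀ hxa).1 hF1
    linarith
  by_cases haz : f₂ a ≤ g a ∧ 0 < a
  swap
  · -- a = 0 : done
    have ha' : a = 0 := by
      rcases haA with h | ⟨_, h2⟩
      · exact h
      · by_contra hne
        exact haz ⟨h2, lt_of_le_of_ne ha0 (Ne.symm hne)⟩
    rw [ha'] at hsx
    have h1 := (hgbetween 0 Set.self_mem_Ici).1
    have h0 := hf₁nonneg 0 Set.self_mem_Ici
    nlinarith
  obtain ⟨hfa, hapos⟩ := haz
  have hga : g a = f₂ a := le_antisymm (hgbetween a ha0).2 hfa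
  exfalso
  -- whether g touches f₂ above x₀
  set B := {x | x₀ ≤ x ∧ f₂ x ≤ g x} with hBdef
  by_cases hB : B.Nonempty
  · -- chord contradiction (independent of hcond)
    have hBbdd : BddBelow B := ⟨x₀, fun x hx => hx.1⟩
    have hBclosed : IsClosed B := by
      have h1 : ContinuousOn (fun x => g x - f₂ x) (Set.Ici x₀) :=
        (hgcont.mono (Ici_subset_Ici.2 hx₀.le)).sub (hf₂cont.mono (Ici_subset_Ici.2 hx₀.le))
      have h2 : IsClosed (Set.Ici x₀ ∩ (fun x => g x - f₂ x) ⁻¹' Set.Ici 0) :=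
        h1.preimage_isClosed_of_isClosed isClosed_Ici isClosed_Ici
      have h3 : B = Set.Ici x₀ ∩ (fun x => g x - f₂ x) ⁻¹' Set.Ici 0 := by
        ext t
        simp only [hBdef, Set.mem_setOf_eq, Set.mem_inter_iff, Set.mem_preimage, Set.mem_Ici]
        constructor
        · rintro ⟨h1', h2'⟩; exact ⟨h1', by linarith⟩
        · rintro ⟨h1', h2'⟩; exact ⟨h1', by linarith⟩
      rw [h3]; exact h2
    set b := sInf B with hbdef
    have hbB : b ∈ B := hBclosed.csInf_mem hB hBbdd
    have hbx : x₀ < b := by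
      rcases lt_or_eq_of_le hbB.1 with h | h
      · exact h
      · exfalso; rw [← h] at hbB; exact absurd hbB.2 (not_le.2 hlt)
    have hb0 : (0 : ℝ) < b := hx₀.trans hbx
    have hgb : g b = f₂ b := le_antisymm (hgbetween b hb0.le).2 hbB.2
    have hltb : ∀ y ∈ Set.Ioo a b, g y < f₂ y := by
      intro y hy
      rcases le_or_gt y x₀ with h | h
      · exact hAprop y hy.1 h
      · by_contra hcon
        push_neg at hcon
        exact absurd (csInf_le hBbdd ⟨h.le, hcon⟩) (not_le.2 hy.2)
    have hconc3 : ConcaveOn ℝ (Set.Ioo a b) g :=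
      hgconc _ (fun y hy => ha0.trans hy.1.le) Set.ordConnected_Ioo hltb
    have hstep : ∀ y ∈ Set.Ioo x₀ b, (g y - g a) / (y - a) ≤ (g x₀ - g a) / (x₀ - a) :=
      fun y hy => concave_slope_anti_endpoint hgcont ha0 hconc3 hax₀ hy.1 hy.2
    have hfin : (g b - g a) / (b - a) ≤ (g x₀ - g a) / (x₀ - a) := by
      refine le_of_tendsto (tendsto_slope_right' hgcont hb0 (hax₀.trans hbx)) ?_
      filter_upwards [Ioo_mem_nhdsLT_of_mem (⟨hbx, le_refl b⟩ : b ∈ Set.Ioc x₀ b)] with y hy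
        using hstep y hy
    have hsec : (f₂ x₀ - f₂ a) / (x₀ - a) ≤ (f₂ b - f₂ a) / (b - a) :=
      hf₂conv.secant_mono ha0 hx₀.le hb0.le hax₀.ne' (hax₀.trans hbx).ne' hbx.le
    have hnum : g x₀ - g a < f₂ x₀ - f₂ a := by rw [hga]; linarith
    have hstrict : (g x₀ - g a) / (x₀ - a) < (f₂ x₀ - f₂ a) / (x₀ - a) := by
      rw [div_lt_div_iff₀ hxa hxa]
      exact mul_lt_mul_of_pos_right hnum hxa
    have heq2 : (f₂ b - f₂ a) / (b - a) = (g b - g a) / (b - a) := by rw [hga, hgb]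
    linarith
  · -- no touching above x₀ : g < f₂ on (a, ∞)
    have hltall : ∀ y, a < y → g y < f₂ y := by
      intro y hy
      rcases le_or_gt y x₀ with h | h
      · exact hAprop y hy h
      · by_contra hcon
        push_neg at hcon
        exact hB ⟨y, h.le, hcon⟩
    have hconc2 : ConcaveOn ℝ (Set.Ioi a) g :=
      hgconc _ (fun y hy => ha0.trans (le_of_lt hy)) Set.ordConnected_Ioi
        (fun y hy => hltall y hy)
    rcases hcond with ⟨Δ, hΔ, hf₂eq⟩ | h2 | h3
    · -- case (i)
      set δ := (f₂ x₀ - g x₀) / (x₀ - a) with hδdef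
      have hδpos : 0 < δ := div_pos (by linarith) hxa
      set y := max (x₀ + 1) (a + Δ / δ + 1) with hydef
      have hy1 : x₀ < y := lt_of_lt_of_le (lt_add_one x₀) (le_max_left _ _)
      have hy2 : a + Δ / δ < y := lt_of_lt_of_le (lt_add_one _) (le_max_right _ _)
      have hy0 : (0 : ℝ) ≤ y := by linarith
      have hya : (0 : ℝ) < y - a := by linarith
      have e1 : (f₂ x₀ - f₂ a) / (x₀ - a) ≤ (f₂ y - f₂ a) / (y - a) :=
        hf₂conv.secant_mono ha0 hx₀.le hy0 hax₀.ne' (hax₀.trans hy1).ne' hy1.le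
      have e2 : f₂ y - f₂ a ≤ (g y - g a) + Δ := by
        have := (hgbetween y hy0).1
        have h5 := hf₂eq y hy0
        rw [hga]
        linarith
      have e4 : (f₂ y - f₂ a) / (y - a) ≤ ((g y - g a) + Δ) / (y - a) := by
        rw [div_le_div_iff₀ hya hya]
        exact mul_le_mul_of_nonneg_right e2 hya.le
      have e3 : (g y - g a) / (y - a) ≤ (g x₀ - g a) / (x₀ - a) := by
        refine concave_slope_anti_endpoint hgcont ha0 ?_ hax₀ hy1 (lt_add_one y)
        exact hconc2.subset (fun z hz => hz.1) (convex_Ioo _ _)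
      have e7 : (f₂ x₀ - f₂ a) / (x₀ - a) ≤ (g x₀ - g a) / (x₀ - a) + Δ / (y - a) := by
        calc (f₂ x₀ - f₂ a) / (x₀ - a) ≤ ((g y - g a) + Δ) / (y - a) := e1.trans e4
        _ = (g y - g a) / (y - a) + Δ / (y - a) := by rw [← add_div]
        _ ≤ (g x₀ - g a) / (x₀ - a) + Δ / (y - a) := by linarith
      have h7 : (f₂ x₀ - f₂ a) / (x₀ - a) = δ + (g x₀ - g a) / (x₀ - a) := by
        rw [hδdef, ← add_div, hga]
        ring_nf
      have e6 : δ ≤ Δ / (y - a) := by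
        rw [h7] at e7
        linarith
      have e5 : Δ / (y - a) < δ := by
        rw [div_lt_iff₀ hya]
        have h8 : Δ / δ < y - a := by linarith
        calc Δ = δ * (Δ / δ) := by field_simp
        _ < δ * (y - a) := mul_lt_mul_of_pos_left h8 hδpos
      linarith
    · -- case (ii)
      have hd2 := convexOn_hasDerivWithinAt_Ioi hf₂conv hx₀
      have ht2 : Tendsto (slope f₂ x₀) (𝓝[>] x₀) (𝓝 (rightDer f₂ x₀)) :=
        (hasDerivWithinAt_iff_tendsto_slope' notMem_Ioi_self).mp hd2
      have hsl : (f₂ x₀ - f₂ a) / (x₀ - a) ≤ rightDer f₂ x₀ := by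
        refine ge_of_tendsto ht2 ?_
        filter_upwards [self_mem_nhdsWithin] with y hy
        have h5 := hf₂conv.slope_mono_adjacent ha0 ((hx₀.trans hy).le) hax₀ hy
        rw [slope_def_field]
        exact h5
      have hpos2 : 0 < (f₂ x₀ - f₂ a) / (x₀ - a) := by
        apply div_pos ?_ hxa
        rw [← hga]
        nlinarith [mul_pos hs hxa]
      have hsup : ((rightDer f₂ x₀ : ℝ) : EReal) ≤ 0 := by
        have h6 := le_iSup (fun t : Set.Ioi (0 : ℝ) => ((rightDer f₂ t : ℝ) : EReal))
          (⟨x₀, hx₀⟩ : Set.Ioi (0 : ℝ))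
        rwa [h2] at h6
      have hfle : rightDer f₂ x₀ ≤ 0 := by exact_mod_cast hsup
      linarith
    · -- case (iii)
      have hup : ∀ y, x₀ < y → g y ≤ g x₀ + s * (y - x₀) := by
        intro y hy
        have h1 := hconc2.slope_le_of_hasDerivWithinAt_Ioi (mem_Ioi.2 hax₀)
          (mem_Ioi.2 (hax₀.trans hy)) hy hder
        rw [slope_def_field] at h1
        have h2' := (div_le_iff₀ (by linarith : (0 : ℝ) < y - x₀)).1 h1
        linarith
      have htop : ((max s 0 : ℝ) : EReal) < ⨆ t : Set.Ioi (0 : ℝ), ((rightDer f₁ t : ℝ) : EReal) := by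
        rw [h3]; exact EReal.coe_lt_top _
      obtain ⟨⟨t, ht0⟩, hts⟩ := lt_iSup_iff.mp htop
      have ht0' : (0 : ℝ) < t := ht0
      have htv : max s 0 < rightDer f₁ t := by exact_mod_cast hts
      have hv0 : 0 < rightDer f₁ t := lt_of_le_of_lt (le_max_right _ _) htv
      have hvs : s < rightDer f₁ t := lt_of_le_of_lt (le_max_left _ _) htv
      set v := rightDer f₁ t with hvdef
      have hdiff1 : DifferentiableWithinAt ℝ f₁ (Set.Ioi t) t := by
        by_contra h
        rw [hvdef] at hv0
        simp only [rightDer] at hv0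
        rw [derivWithin_zero_of_not_differentiableWithinAt h] at hv0
        exact lt_irrefl 0 hv0
      have hslope : ∀ y, t < y → v * (y - t) ≤ f₁ y - f₁ t := by
        intro y hy
        have h1 := hf₁conv.le_slope_of_hasDerivWithinAt_Ioi ht0'.le ((ht0'.trans hy).le) hy
          hdiff1.hasDerivWithinAt
        rw [slope_def_field] at h1
        have h2' := (le_div_iff₀ (by linarith : (0 : ℝ) < y - t)).1 h1
        rw [hvdef]
        simp only [rightDer]
        linarith
      set y := max (max x₀ t + 1) ((g x₀ - s * x₀ - f₁ t + v * t) / (v - s) + 1) with hydef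
      have hyA : max x₀ t + 1 ≤ y := le_max_left _ _
      have hyB : (g x₀ - s * x₀ - f₁ t + v * t) / (v - s) + 1 ≤ y := le_max_right _ _
      have hy1 : x₀ < y := by have := le_max_left x₀ t; linarith
      have hy2 : t < y := by have := le_max_right x₀ t; linarith
      have hy3 : (g x₀ - s * x₀ - f₁ t + v * t) / (v - s) < y := by linarith
      have k1 : f₁ y ≤ g y := (hgbetween y (by linarith : (0 : ℝ) ≤ y)).1
      have k2 : g y ≤ g x₀ + s * (y - x₀) := hup y hy1
      have k3 : v * (y - t) ≤ f₁ y - f₁ t := hslope y hy2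
      have k4 : g x₀ - s * x₀ - f₁ t + v * t < (v - s) * y := by
        have h9 := (div_lt_iff₀ (by linarith : (0 : ℝ) < v - s)).1 hy3
        linarith
      nlinarith [k1, k2, k3, k4]
end

section
/- Let K > 0, c ≥ 1 and 0 ≤ Δ < K, and set f₁(x) = (x − K)⁺ and f₂(x) = c·(x − K)⁺ + Δ for x ≥ 0. Then the function g defined by g(x) = (Δ/K)·x for 0 ≤ x < K and g(x) = x − K + Δ for x ≥ K belongs to ℍ and satisfies g ≤ h pointwise for every h ∈ ℍ; i.e., g is the minimal element of ℍ. -/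
open Set Filter Topology


private lemma concave_aux {f : ℝ → ℝ} {a b : ℝ}
    (hc : ContinuousOn f (Icc a b)) (h : ConcaveOn ℝ (Ioo a b) f)
    {x y u v : ℝ} (hx : x ∈ Icc a b) (hy : y ∈ Icc a b) (hxy : x < y)
    (hu : 0 < u) (hv : 0 < v) (huv : u + v = 1) :
    u * f x + v * f y ≤ f (u * x + v * y) := by
  set z := u * x + v * y with hz
  have hux : u * x + v * x = x := by linear_combination x * huv
  have huy : u * y + v * y = y := by linear_combination y * huv
  have hxz : x < z := by have := mul_pos hv (sub_pos.2 hxy); simp only [hz]; linarith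
  have hzy : z < y := by have := mul_pos hu (sub_pos.2 hxy); simp only [hz]; linarith
  have hza : a < z := lt_of_le_of_lt hx.1 hxz
  have hzb : z < b := lt_of_lt_of_le hzy hy.2
  have key : ∀ t ∈ Ioo (0:ℝ) 1,
      u * f (x + t * (z - x)) + v * f (y + t * (z - y)) ≤ f z := by
    intro t ht
    have hxt : x + t * (z - x) ∈ Ioo a b :=
      ⟨lt_of_le_of_lt hx.1 (by nlinarith [ht.1]),
       by nlinarith [mul_lt_mul_of_pos_right ht.2 (sub_pos.2 hxz)]⟩
    have hyt : y + t * (z - y) ∈ Ioo a b :=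
      ⟨by nlinarith [mul_lt_mul_of_pos_right ht.2 (sub_pos.2 hzy)],
       lt_of_lt_of_le (by nlinarith [ht.1]) hy.2⟩
    have h2 := h.2 hxt hyt hu.le hv.le huv
    simp only [smul_eq_mul] at h2
    have heq : u * (x + t * (z - x)) + v * (y + t * (z - y)) = z := by
      linear_combination (1 - t) * hz.symm + t * z * huv
    rwa [heq] at h2
  have hmem : Ioo (0:ℝ) 1 ∈ 𝓝[>] (0:ℝ) :=
    Ioo_mem_nhdsGT_of_mem ⟨le_refl 0, one_pos⟩
  have hxlim : Tendsto (fun t : ℝ => f (x + t * (z - x))) (𝓝[>] 0) (𝓝 (f x)) := by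
    have h1 : Tendsto (fun t : ℝ => x + t * (z - x)) (𝓝[>] 0) (𝓝[Icc a b] x) := by
      rw [tendsto_nhdsWithin_iff]
      constructor
      · have hcc : Continuous (fun t : ℝ => x + t * (z - x)) := by continuity
        exact (hcc.tendsto' 0 x (by ring)).mono_left nhdsWithin_le_nhds
      · filter_upwards [hmem] with t ht
        exact ⟨by nlinarith [ht.1, hx.1], by nlinarith [mul_lt_mul_of_pos_right ht.2 (sub_pos.2 hxz)]⟩
    exact Filter.Tendsto.comp (hc x hx) h1
  have hylim : Tendsto (fun t : ℝ => f (y + t * (z - y))) (𝓝[>] 0) (𝓝 (f y)) := by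
    have h1 : Tendsto (fun t : ℝ => y + t * (z - y)) (𝓝[>] 0) (𝓝[Icc a b] y) := by
      rw [tendsto_nhdsWithin_iff]
      constructor
      · have hcc : Continuous (fun t : ℝ => y + t * (z - y)) := by continuity
        exact (hcc.tendsto' 0 y (by ring)).mono_left nhdsWithin_le_nhds
      · filter_upwards [hmem] with t ht
        refine ⟨?_, ?_⟩
        · nlinarith [mul_lt_mul_of_pos_right ht.2 (sub_pos.2 hzy), hza]
        · nlinarith [ht.1, hy.2, hzy]
    exact Filter.Tendsto.comp (hc y hy) h1
  have htot : Tendsto (fun t : ℝ => u * f (x + t * (z - x)) + v * f (y + t * (z - y)))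
      (𝓝[>] 0) (𝓝 (u * f x + v * f y)) := (hxlim.const_mul u).add (hylim.const_mul v)
  exact le_of_tendsto htot (by filter_upwards [hmem] with t ht using key t ht)

lemma concaveOn_Icc_of_Ioo {f : ℝ → ℝ} {a b : ℝ}
    (hc : ContinuousOn f (Icc a b)) (h : ConcaveOn ℝ (Ioo a b) f) :
    ConcaveOn ℝ (Icc a b) f := by
  refine ⟨convex_Icc a b, ?_⟩
  intro x hx y hy u v hu hv huv
  simp only [smul_eq_mul]
  rcases eq_or_lt_of_le hu with h0 | hu'
  · have hv1 : v = 1 := by linarith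
    simp [← h0, hv1]
  rcases eq_or_lt_of_le hv with h0 | hv'
  · have hu1 : u = 1 := by linarith
    simp [← h0, hu1]
  rcases lt_trichotomy x y with hxy | hxy | hxy
  · exact concave_aux hc h hx hy hxy hu' hv' huv
  · subst hxy
    have he : u * x + v * x = x := by rw [← add_mul, huv, one_mul]
    rw [he]
    exact le_of_eq (by rw [← add_mul, huv, one_mul])
  · have h2 := concave_aux hc h hy hx hxy hv' hu' (by linarith)
    rw [add_comm (v * y) (u * x)] at h2
    linarith

lemma concaveOn_Ici_of_Ioi {f : ℝ → ℝ} {a : ℝ}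
    (hc : ContinuousOn f (Ici a)) (h : ConcaveOn ℝ (Ioi a) f) :
    ConcaveOn ℝ (Ici a) f := by
  refine ⟨convex_Ici a, ?_⟩
  intro x hx y hy u v hu hv huv
  have haM : a < max x y + 1 := lt_of_le_of_lt (le_trans hx (le_max_left x y)) (by linarith)
  have hfull := concaveOn_Icc_of_Ioo (hc.mono Icc_subset_Ici_self)
    (h.subset Ioo_subset_Ioi_self (convex_Ioo a (max x y + 1)))
  exact hfull.2 ⟨hx, by linarith [le_max_left x y]⟩ ⟨hy, by linarith [le_max_right x y]⟩ hu hv huv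

lemma claim1 (K c Δ : ℝ) (hK : 0 < K) (hc : 1 ≤ c) (hΔ0 : 0 ≤ Δ) (hΔK : Δ < K)
    (h : ℝ → ℝ) (hh : memH (fun x => max (x - K) 0) (fun x => c * max (x - K) 0 + Δ) h) :
    ∀ x₀ ∈ Ici (0:ℝ), x₀ - K + Δ ≤ h x₀ := by
  obtain ⟨hcont, hbd, hconc⟩ := hh
  intro x₀ hx₀
  simp only [mem_Ici] at hx₀
  by_contra hlt
  push_neg at hlt
  -- basic facts
  have hf1 : ∀ x : ℝ, 0 ≤ x → x - K ≤ h x := fun x hx =>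
    le_trans (le_max_left _ _) ((hbd x hx).1)
  have h0 : (0:ℝ) ≤ h 0 := le_trans (le_max_right _ _) ((hbd 0 Set.self_mem_Ici).1)
  have hl2 : ∀ x : ℝ, 0 ≤ x → x - K + Δ ≤ c * max (x - K) 0 + Δ := by
    intro x hx
    rcases le_total x K with hxK | hxK
    · rw [max_eq_right (by linarith)]; nlinarith
    · rw [max_eq_left (by linarith)]; nlinarith
  -- the set A
  set A : Set ℝ := Icc 0 x₀ ∩ {x | x - K + Δ ≤ h x} with hAdef
  have hAclosed : IsClosed A := by
    have : A = Icc 0 x₀ ∩ (fun x => h x - (x - K + Δ)) ⁻¹' Ici 0 := by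
      ext t; simp [hAdef, sub_nonneg]
    rw [this]
    exact ContinuousOn.preimage_isClosed_of_isClosed
      ((hcont.mono (fun t ht => ht.1)).sub (by fun_prop)) isClosed_Icc isClosed_Ici
  have hA0 : 0 ∈ A := ⟨⟨le_rfl, hx₀⟩, by simp only [mem_setOf_eq]; linarith⟩
  have hAcomp : IsCompact A := (isCompact_Icc).of_isClosed_subset hAclosed inter_subset_left
  have hAbdd : BddAbove A := ⟨x₀, fun y hy => hy.1.2⟩
  set a := sSup A with ha
  have haA : a ∈ A := hAcomp.sSup_mem ⟨0, hA0⟩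
  have ha0 : 0 ≤ a := haA.1.1
  have hax : a ≤ x₀ := haA.1.2
  have hal : a - K + Δ ≤ h a := haA.2
  have hax' : a < x₀ := lt_of_le_of_ne hax (fun e => by rw [e] at hal; linarith)
  have hbetween : ∀ x, a < x → x ≤ x₀ → h x < x - K + Δ := by
    intro x h1 h2
    by_contra hc'
    push_neg at hc'
    have hxA : x ∈ A := ⟨⟨le_trans ha0 h1.le, h2⟩, hc'⟩
    exact absurd (le_csSup hAbdd hxA) (not_le.2 h1)
  -- the set B
  set B : Set ℝ := Ici x₀ ∩ {x | x - K + Δ ≤ h x} with hBdef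
  have hBclosed : IsClosed B := by
    have : B = Ici x₀ ∩ (fun x => h x - (x - K + Δ)) ⁻¹' Ici 0 := by
      ext t; simp [hBdef, sub_nonneg]
    rw [this]
    exact ContinuousOn.preimage_isClosed_of_isClosed
      ((hcont.mono (fun t ht => le_trans hx₀ ht)).sub (by fun_prop)) isClosed_Ici isClosed_Ici
  by_cases hB : B.Nonempty
  · -- bounded case
    set b := sInf B with hb
    have hbB : b ∈ B := hBclosed.csInf_mem hB ⟨x₀, fun y hy => hy.1⟩
    have hbx : x₀ ≤ b := hbB.1
    have hbl : b - K + Δ ≤ h b := hbB.2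
    have hbx' : x₀ < b := lt_of_le_of_ne hbx (fun e => by rw [← e] at hbl; linarith)
    have hbetween2 : ∀ x, x₀ ≤ x → x < b → h x < x - K + Δ := by
      intro x h1 h2
      by_contra hc'
      push_neg at hc'
      have hxB : x ∈ B := ⟨mem_Ici.2 h1, hc'⟩
      exact absurd (csInf_le ⟨x₀, fun y hy => hy.1⟩ hxB) (not_le.2 h2)
    have hab : a < b := lt_trans hax' hbx'
    have hconcIoo : ConcaveOn ℝ (Ioo a b) h := by
      refine hconc (Ioo a b) (fun x hx => le_trans ha0 hx.1.le) Set.ordConnected_Ioo ?_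
      intro x hx
      have hx0 : (0:ℝ) ≤ x := le_trans ha0 hx.1.le
      rcases le_or_gt x x₀ with hle | hgt
      · exact lt_of_lt_of_le (hbetween x hx.1 hle) (hl2 x hx0)
      · exact lt_of_lt_of_le (hbetween2 x hgt.le hx.2) (hl2 x hx0)
    have hIcc : ConcaveOn ℝ (Icc a b) h :=
      concaveOn_Icc_of_Ioo (hcont.mono (fun t ht => le_trans ha0 ht.1)) hconcIoo
    have hseg : x₀ ∈ segment ℝ a b := by
      rw [segment_eq_Icc hab.le]; exact ⟨hax'.le, hbx'.le⟩
    obtain ⟨u, v, hu, hv, huv, hx⟩ := hseg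
    have hch := hIcc.2 (left_mem_Icc.2 hab.le) (right_mem_Icc.2 hab.le) hu hv huv
    simp only [smul_eq_mul] at hch hx
    rw [hx] at hch
    have e1 : u * (a - K + Δ) + v * (b - K + Δ) = x₀ - K + Δ := by
      linear_combination hx + (Δ - K) * huv
    nlinarith [mul_le_mul_of_nonneg_left hal hu, mul_le_mul_of_nonneg_left hbl hv]
  · -- unbounded case
    have hBe : ∀ x, x₀ ≤ x → h x < x - K + Δ := by
      intro x hx
      by_contra hc'
      push_neg at hc'
      exact hB ⟨x, hx, hc'⟩
    have hIoi : ∀ x, a < x → h x < x - K + Δ := by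
      intro x hx
      rcases le_or_gt x x₀ with hle | hgt
      · exact hbetween x hx hle
      · exact hBe x hgt.le
    have hconcIoi : ConcaveOn ℝ (Ioi a) h := by
      refine hconc (Ioi a) (fun x hx => le_trans ha0 (le_of_lt hx)) Set.ordConnected_Ioi ?_
      intro x hx
      exact lt_of_lt_of_le (hIoi x hx) (hl2 x (le_trans ha0 (le_of_lt hx)))
    have hIci : ConcaveOn ℝ (Ici a) h :=
      concaveOn_Ici_of_Ioi (hcont.mono (Ici_subset_Ici.2 ha0)) hconcIoi
    set ε := (x₀ - K + Δ) - h x₀ with hε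
    have hε0 : 0 < ε := by simp only [hε]; linarith
    set y := max (x₀ + 1) (a + Δ * (x₀ - a) / ε + 1) with hy
    have hyx : x₀ < y := lt_of_lt_of_le (by linarith) (le_max_left _ _)
    have hya : a < y := lt_trans hax' hyx
    have hy2 : Δ * (x₀ - a) < (y - a) * ε := by
      have h1 : a + Δ * (x₀ - a) / ε + 1 ≤ y := le_max_right _ _
      have h2 : Δ * (x₀ - a) / ε * ε = Δ * (x₀ - a) := div_mul_cancel₀ _ (ne_of_gt hε0)
      nlinarith
    have hseg : x₀ ∈ segment ℝ a y := by
      rw [segment_eq_Icc hya.le]; exact ⟨hax'.le, hyx.le⟩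
    obtain ⟨u, v, hu, hv, huv, hx⟩ := hseg
    have hch := hIci.2 (self_mem_Ici) (mem_Ici.2 hya.le) hu hv huv
    simp only [smul_eq_mul] at hch hx
    rw [hx] at hch
    have hy0 : (0:ℝ) ≤ y := le_trans ha0 hya.le
    have hhy : y - K ≤ h y := hf1 y hy0
    have e2 : u * (a - K + Δ) + v * (y - K) = x₀ - K + u * Δ := by
      linear_combination hx - K * huv
    have hεΔv : ε ≤ Δ * v := by
      have m1 := mul_le_mul_of_nonneg_left hal hu
      have m2 := mul_le_mul_of_nonneg_left hhy hv
      have h3 : Δ * (u + v) = Δ * 1 := by rw [huv]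
      nlinarith
    have hveq : v * (y - a) = x₀ - a := by linear_combination hx - a * huv
    nlinarith [mul_le_mul_of_nonneg_right hεΔv (sub_pos.2 hya).le]

lemma claim2 (K c Δ : ℝ) (hK : 0 < K) (hc : 1 ≤ c) (hΔ0 : 0 ≤ Δ) (hΔK : Δ < K)
    (h : ℝ → ℝ) (hh : memH (fun x => max (x - K) 0) (fun x => c * max (x - K) 0 + Δ) h) :
    ∀ x₀ ∈ Icc (0:ℝ) K, Δ / K * x₀ ≤ h x₀ := by
  have hKle : Δ ≤ h K := by
    have := claim1 K c Δ hK hc hΔ0 hΔK h hh K (mem_Ici.2 hK.le)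
    linarith
  obtain ⟨hcont, hbd, hconc⟩ := hh
  intro x₀ hx₀
  by_contra hlt
  push_neg at hlt
  have hDK : Δ / K * K = Δ := div_mul_cancel₀ _ hK.ne'
  have hdk0 : 0 ≤ Δ / K := div_nonneg hΔ0 hK.le
  have h0 : (0:ℝ) ≤ h 0 := le_trans (le_max_right _ _) ((hbd 0 Set.self_mem_Ici).1)
  -- set A
  set A : Set ℝ := Icc 0 x₀ ∩ {x | Δ / K * x ≤ h x} with hAdef
  have hAclosed : IsClosed A := by
    have : A = Icc 0 x₀ ∩ (fun x => h x - Δ / K * x) ⁻¹' Ici 0 := by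
      ext t; simp [hAdef, sub_nonneg]
    rw [this]
    exact ContinuousOn.preimage_isClosed_of_isClosed
      ((hcont.mono (fun t ht => ht.1)).sub (by fun_prop)) isClosed_Icc isClosed_Ici
  have hA0 : 0 ∈ A := ⟨⟨le_rfl, hx₀.1⟩, by simp only [mem_setOf_eq]; linarith⟩
  have hAcomp : IsCompact A := (isCompact_Icc).of_isClosed_subset hAclosed inter_subset_left
  have hAbdd : BddAbove A := ⟨x₀, fun y hy => hy.1.2⟩
  set a := sSup A with ha
  have haA : a ∈ A := hAcomp.sSup_mem ⟨0, hA0⟩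
  have ha0 : 0 ≤ a := haA.1.1
  have hax : a ≤ x₀ := haA.1.2
  have hal : Δ / K * a ≤ h a := haA.2
  have hax' : a < x₀ := lt_of_le_of_ne hax (fun e => by rw [e] at hal; linarith)
  have hbetween : ∀ x, a < x → x ≤ x₀ → h x < Δ / K * x := by
    intro x h1 h2
    by_contra hc'
    push_neg at hc'
    have hxA : x ∈ A := ⟨⟨le_trans ha0 h1.le, h2⟩, hc'⟩
    exact absurd (le_csSup hAbdd hxA) (not_le.2 h1)
  -- set B
  set B : Set ℝ := Icc x₀ K ∩ {x | Δ / K * x ≤ h x} with hBdef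
  have hBclosed : IsClosed B := by
    have : B = Icc x₀ K ∩ (fun x => h x - Δ / K * x) ⁻¹' Ici 0 := by
      ext t; simp [hBdef, sub_nonneg]
    rw [this]
    exact ContinuousOn.preimage_isClosed_of_isClosed
      ((hcont.mono (fun t ht => le_trans hx₀.1 ht.1)).sub (by fun_prop)) isClosed_Icc isClosed_Ici
  have hBK : K ∈ B := ⟨⟨hx₀.2, le_rfl⟩, by simp only [mem_setOf_eq]; rw [hDK]; exact hKle⟩
  have hBcomp : IsCompact B := (isCompact_Icc).of_isClosed_subset hBclosed inter_subset_left
  set b := sInf B with hb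
  have hbB : b ∈ B := hBclosed.csInf_mem ⟨K, hBK⟩ ⟨x₀, fun y hy => hy.1.1⟩
  have hbx : x₀ ≤ b := hbB.1.1
  have hbK : b ≤ K := hbB.1.2
  have hbl : Δ / K * b ≤ h b := hbB.2
  have hbx' : x₀ < b := lt_of_le_of_ne hbx (fun e => by rw [← e] at hbl; linarith)
  have hbetween2 : ∀ x, x₀ ≤ x → x < b → h x < Δ / K * x := by
    intro x h1 h2
    by_contra hc'
    push_neg at hc'
    have hxB : x ∈ B := ⟨⟨h1, by linarith⟩, hc'⟩
    exact absurd (csInf_le ⟨x₀, fun y hy => hy.1.1⟩ hxB) (not_le.2 h2)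
  have hab : a < b := lt_trans hax' hbx'
  have hconcIoo : ConcaveOn ℝ (Ioo a b) h := by
    refine hconc (Ioo a b) (fun x hx => le_trans ha0 hx.1.le) Set.ordConnected_Ioo ?_
    intro x hx
    have hx0 : (0:ℝ) ≤ x := le_trans ha0 hx.1.le
    have hxK : x ≤ K := le_trans hx.2.le hbK
    have hhx : h x < Δ / K * x := by
      rcases le_or_gt x x₀ with hle | hgt
      · exact hbetween x hx.1 hle
      · exact hbetween2 x hgt.le hx.2
    have hmΔ : Δ / K * x ≤ Δ := by
      have := mul_le_mul_of_nonneg_left hxK hdk0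
      rw [hDK] at this; exact this
    have hmax : max (x - K) 0 = 0 := max_eq_right (by linarith)
    show h x < c * max (x - K) 0 + Δ
    rw [hmax]
    linarith
  have hIcc : ConcaveOn ℝ (Icc a b) h :=
    concaveOn_Icc_of_Ioo (hcont.mono (fun t ht => le_trans ha0 ht.1)) hconcIoo
  have hseg : x₀ ∈ segment ℝ a b := by
    rw [segment_eq_Icc hab.le]; exact ⟨hax'.le, hbx'.le⟩
  obtain ⟨u, v, hu, hv, huv, hx⟩ := hseg
  have hch := hIcc.2 (left_mem_Icc.2 hab.le) (right_mem_Icc.2 hab.le) hu hv huv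
  simp only [smul_eq_mul] at hch hx
  rw [hx] at hch
  have e1 : u * (Δ / K * a) + v * (Δ / K * b) = Δ / K * x₀ := by
    linear_combination (Δ / K) * hx
  nlinarith [mul_le_mul_of_nonneg_left hal hu, mul_le_mul_of_nonneg_left hbl hv]

/-- (Call option, `Δ < K`.) For `f₁(x) = (x−K)⁺`, `f₂(x) = c(x−K)⁺ + Δ` with
`K > 0`, `c ≥ 1`, `0 ≤ Δ < K`, the function `g(x) = (Δ/K)x` for `x < K` and `g(x) = x − K + Δ`
for `x ≥ K` is the minimal element of `ℍ`. -/
theorem stmt12 (K c Δ : ℝ) (hK : 0 < K) (hc : 1 ≤ c) (hΔ0 : 0 ≤ Δ) (hΔK : Δ < K) :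
    memH (fun x => max (x - K) 0) (fun x => c * max (x - K) 0 + Δ)
      (fun x => if x < K then (Δ / K) * x else x - K + Δ) ∧
    ∀ h : ℝ → ℝ, memH (fun x => max (x - K) 0) (fun x => c * max (x - K) 0 + Δ) h →
      ∀ x ∈ Set.Ici (0 : ℝ), (if x < K then (Δ / K) * x else x - K + Δ) ≤ h x := by
  have hDK : Δ / K * K = Δ := div_mul_cancel₀ _ hK.ne'
  have hdk0 : 0 ≤ Δ / K := div_nonneg hΔ0 hK.le
  have hdk1 : Δ / K ≤ 1 := (div_le_one hK).2 hΔK.le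
  constructor
  · refine ⟨?_, ?_, ?_⟩
    · -- continuity
      have gmax : (fun x : ℝ => if x < K then Δ / K * x else x - K + Δ)
          = fun x : ℝ => max (Δ / K * x) (x - K + Δ) := by
        funext x
        split_ifs with hxK
        · exact (max_eq_left (by nlinarith [mul_nonneg (sub_nonneg.2 hdk1) (sub_nonneg.2 hxK.le)])).symm
        · push_neg at hxK
          exact (max_eq_right (by nlinarith [mul_nonneg (sub_nonneg.2 hdk1) (sub_nonneg.2 hxK)])).symm
      rw [gmax]
      exact (Continuous.max (by fun_prop) (by fun_prop)).continuousOn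
    · -- bounds
      intro x hx
      simp only [mem_Ici] at hx
      dsimp only
      constructor
      · split_ifs with hxK
        · rw [max_eq_right (by linarith)]
          positivity
        · push_neg at hxK
          rw [max_eq_left (by linarith)]
          linarith
      · split_ifs with hxK
        · rw [max_eq_right (by linarith)]
          have : Δ / K * x ≤ Δ / K * K := mul_le_mul_of_nonneg_left hxK.le hdk0
          rw [hDK] at this
          linarith
        · push_neg at hxK
          rw [max_eq_left (by linarith)]
          nlinarith [mul_nonneg (sub_nonneg.2 hc) (sub_nonneg.2 hxK)]
    · -- concavity
      intro D hD0 hDord hDlt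
      have hKD : K ∉ D := by
        intro hKD
        have := hDlt K hKD
        simp only [lt_irrefl, if_false, sub_self, max_self, if_neg (lt_irrefl K)] at this
        linarith
      refine ⟨convex_iff_ordConnected.2 hDord, ?_⟩
      intro x hx y hy u v hu hv huv
      have hconvD : Convex ℝ D := convex_iff_ordConnected.2 hDord
      have hzD : u • x + v • y ∈ D := hconvD hx hy hu hv huv
      simp only [smul_eq_mul] at hzD ⊢
      by_cases hcase : ∀ t ∈ D, t < K
      · rw [if_pos (hcase x hx), if_pos (hcase y hy), if_pos (hcase _ hzD)]
        exact le_of_eq (by ring)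
      · have hallge : ∀ t ∈ D, ¬ t < K := by
          push_neg at hcase
          obtain ⟨t₀, ht₀D, ht₀⟩ := hcase
          intro t htD htK
          exact hKD (hDord.out htD ht₀D ⟨htK.le, ht₀⟩)
        rw [if_neg (hallge x hx), if_neg (hallge y hy), if_neg (hallge _ hzD)]
        exact le_of_eq (by linear_combination (Δ - K) * huv)
  · -- minimality
    intro h hh x hx
    split_ifs with hxK
    · exact claim2 K c Δ hK hc hΔ0 hΔK h hh x ⟨hx, hxK.le⟩
    · push_neg at hxK
      exact claim1 K c Δ hK hc hΔ0 hΔK h hh x hx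
end

section
/- Let K > 0, c ≥ 1 and Δ ≥ K, and set f₁(x) = (x − K)⁺ and f₂(x) = c·(x − K)⁺ + Δ for x ≥ 0. Then the function g(x) = x belongs to ℍ and satisfies g ≤ h pointwise for every h ∈ ℍ; i.e., the identity function is the minimal element of ℍ. -/
open Set

/-- Concavity chord inequality. -/
lemma chord {h : ℝ → ℝ} {D : Set ℝ} (hc : ConcaveOn ℝ D h) {u v x : ℝ}
    (hu : u ∈ D) (hv : v ∈ D) (h1 : u < x) (h2 : x < v) :
    ((v - x) / (v - u)) * h u + ((x - u) / (v - u)) * h v ≤ h x := by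
  have hd : (0 : ℝ) < v - u := by linarith
  have ha : (0 : ℝ) ≤ (v - x) / (v - u) := div_nonneg (by linarith) hd.le
  have hb : (0 : ℝ) ≤ (x - u) / (v - u) := div_nonneg (by linarith) hd.le
  have hab : (v - x) / (v - u) + (x - u) / (v - u) = 1 := by field_simp; ring
  have hx : ((v - x) / (v - u)) • u + ((x - u) / (v - u)) • v = x := by
    simp only [smul_eq_mul]; field_simp; ring
  have := hc.2 hu hv ha hb hab
  rw [hx] at this
  simpa [smul_eq_mul] using this

lemma near_right (h : ℝ → ℝ) (hc : ContinuousOn h (Set.Ici 0)) {a m : ℝ} (ha : 0 ≤ a)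
    (ham : a < m) {ε : ℝ} (hε : 0 < ε) : ∃ u ∈ Set.Ioo a m, h a - ε < h u := by
  have hsub : Ioo a m ⊆ Ici 0 := fun x hx => le_of_lt (lt_of_le_of_lt ha hx.1)
  have hct : ContinuousWithinAt h (Ioo a m) a := (hc a (mem_Ici.mpr ha)).mono hsub
  have hcl : a ∈ closure (Ioo a m) := by
    rw [closure_Ioo ham.ne]; exact ⟨le_refl a, ham.le⟩
  haveI : (nhdsWithin a (Ioo a m)).NeBot := mem_closure_iff_nhdsWithin_neBot.mp hcl
  have hev : ∀ᶠ u in nhdsWithin a (Ioo a m), h a - ε < h u :=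
    hct.eventually (eventually_gt_nhds (by linarith))
  obtain ⟨u, hu1, hu2⟩ := (hev.and eventually_mem_nhdsWithin).exists
  exact ⟨u, hu2, hu1⟩

lemma near_left (h : ℝ → ℝ) (hc : ContinuousOn h (Set.Ici 0)) {b m : ℝ} (hm : 0 ≤ m)
    (hmb : m < b) {ε : ℝ} (hε : 0 < ε) : ∃ v ∈ Set.Ioo m b, h b - ε < h v := by
  have hsub : Ioo m b ⊆ Ici 0 := fun x hx => le_of_lt (lt_of_le_of_lt hm hx.1)
  have hct : ContinuousWithinAt h (Ioo m b) b := (hc b (mem_Ici.mpr (hm.trans hmb.le))).mono hsub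
  have hcl : b ∈ closure (Ioo m b) := by
    rw [closure_Ioo hmb.ne]; exact ⟨hmb.le, le_refl b⟩
  haveI : (nhdsWithin b (Ioo m b)).NeBot := mem_closure_iff_nhdsWithin_neBot.mp hcl
  have hev : ∀ᶠ v in nhdsWithin b (Ioo m b), h b - ε < h v :=
    hct.eventually (eventually_gt_nhds (by linarith))
  obtain ⟨v, hv1, hv2⟩ := (hev.and eventually_mem_nhdsWithin).exists
  exact ⟨v, hv2, hv1⟩

set_option maxHeartbeats 1000000 in
/-- (Call option, `Δ ≥ K`.) For `f₁(x) = (x−K)⁺`, `f₂(x) = c(x−K)⁺ + Δ` with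
`K > 0`, `c ≥ 1`, `Δ ≥ K`, the identity function `g(x) = x` is the minimal element of `ℍ`. -/
theorem stmt13 (K c Δ : ℝ) (hK : 0 < K) (hc : 1 ≤ c) (hΔK : K ≤ Δ) :
    memH (fun x => max (x - K) 0) (fun x => c * max (x - K) 0 + Δ) (fun x => x) ∧
    ∀ h : ℝ → ℝ, memH (fun x => max (x - K) 0) (fun x => c * max (x - K) 0 + Δ) h →
      ∀ x ∈ Set.Ici (0 : ℝ), x ≤ h x := by
  have hid_le_f2 : ∀ x : ℝ, 0 ≤ x → x ≤ c * max (x - K) 0 + Δ := by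
    intro x hx
    rcases le_total x K with hxK | hxK
    · have h0 : (0 : ℝ) ≤ max (x - K) 0 := le_max_right _ _
      nlinarith
    · rw [max_eq_left (by linarith)]; nlinarith
  constructor
  · refine ⟨continuous_id.continuousOn, ?_, ?_⟩
    · intro x hx
      exact ⟨max_le (by linarith) hx, hid_le_f2 x hx⟩
    · intro D hD hOC _
      exact ⟨convex_iff_ordConnected.mpr hOC, fun x _ y _ a b _ _ _ => le_of_eq rfl⟩
  · intro h hmem x₀ hx₀
    obtain ⟨hcont, hbnd, hconc⟩ := hmem
    by_contra hlt
    push_neg at hlt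
    rw [mem_Ici] at hx₀
    obtain ⟨ε, hεdef⟩ : ∃ ε : ℝ, ε = (x₀ - h x₀) / 4 := ⟨_, rfl⟩
    have hε : 0 < ε := by rw [hεdef]; linarith
    have h0 : (0 : ℝ) ≤ h 0 := by
      have := (hbnd 0 (mem_Ici.mpr le_rfl)).1
      simp only [sup_le_iff, max_le_iff] at this
      exact this.2
    -- the supremum a of points ≤ x₀ where h x ≥ x
    have hS₁closed : IsClosed (Icc 0 x₀ ∩ (fun x => h x - x) ⁻¹' Ici 0) := by
      apply ContinuousOn.preimage_isClosed_of_isClosed _ isClosed_Icc isClosed_Ici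
      exact (hcont.mono Icc_subset_Ici_self).sub continuous_id.continuousOn
    have hS₁ne : (Icc 0 x₀ ∩ (fun x => h x - x) ⁻¹' Ici 0).Nonempty :=
      ⟨0, ⟨le_rfl, hx₀⟩, by simpa using h0⟩
    have hS₁bdd : BddAbove (Icc 0 x₀ ∩ (fun x => h x - x) ⁻¹' Ici 0) :=
      (bddAbove_Icc).mono inter_subset_left
    obtain ⟨a, hadef⟩ : ∃ a : ℝ, a = sSup (Icc 0 x₀ ∩ (fun x => h x - x) ⁻¹' Ici 0) := ⟨_, rfl⟩
    have haS : a ∈ Icc 0 x₀ ∩ (fun x => h x - x) ⁻¹' Ici 0 := by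
      rw [hadef]; exact hS₁closed.csSup_mem hS₁ne hS₁bdd
    have ha0 : 0 ≤ a := haS.1.1
    have hah : a ≤ h a := by
      have := haS.2; simp only [mem_preimage, mem_Ici] at this; linarith
    have ha_lt : a < x₀ := lt_of_le_of_ne haS.1.2 (by rintro rfl; linarith)
    have key1 : ∀ x, a < x → x ≤ x₀ → h x < x := by
      intro x hax hxx₀
      by_contra hcon
      push_neg at hcon
      have hxS : x ∈ Icc 0 x₀ ∩ (fun x => h x - x) ⁻¹' Ici 0 :=
        ⟨⟨ha0.trans hax.le, hxx₀⟩, by simp only [mem_preimage, mem_Ici]; linarith⟩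
      have : x ≤ a := by rw [hadef]; exact le_csSup hS₁bdd hxS
      linarith
    -- u close to a with h u > u - 2ε
    have hm₁ : a < min x₀ (a + ε) := lt_min ha_lt (by linarith)
    obtain ⟨u, huIoo, huh⟩ := near_right h hcont ha0 hm₁ hε
    have hua : a < u := huIoo.1
    have hux₀ : u < x₀ := lt_of_lt_of_le huIoo.2 (min_le_left _ _)
    have huε : u < a + ε := lt_of_lt_of_le huIoo.2 (min_le_right _ _)
    have hu_lb : u - 2 * ε < h u := by linarith
    by_cases hS2 : ∃ x, x₀ ≤ x ∧ x ≤ h x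
    · -- Case 1: h comes back above the identity at some finite point
      have hS₂closed : IsClosed (Ici x₀ ∩ (fun x => h x - x) ⁻¹' Ici 0) := by
        apply ContinuousOn.preimage_isClosed_of_isClosed _ isClosed_Ici isClosed_Ici
        exact (hcont.mono (Ici_subset_Ici.mpr hx₀)).sub continuous_id.continuousOn
      obtain ⟨w, hw1, hw2⟩ := hS2
      have hS₂ne : (Ici x₀ ∩ (fun x => h x - x) ⁻¹' Ici 0).Nonempty :=
        ⟨w, hw1, by simp only [mem_preimage, mem_Ici]; linarith⟩
      have hS₂bdd : BddBelow (Ici x₀ ∩ (fun x => h x - x) ⁻¹' Ici 0) :=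
        (bddBelow_Ici).mono inter_subset_left
      obtain ⟨b, hbdef⟩ : ∃ b : ℝ, b = sInf (Ici x₀ ∩ (fun x => h x - x) ⁻¹' Ici 0) := ⟨_, rfl⟩
      have hbS : b ∈ Ici x₀ ∩ (fun x => h x - x) ⁻¹' Ici 0 := by
        rw [hbdef]; exact hS₂closed.csInf_mem hS₂ne hS₂bdd
      have hbh : b ≤ h b := by
        have := hbS.2; simp only [mem_preimage, mem_Ici] at this; linarith
      have hx₀b : x₀ < b := lt_of_le_of_ne hbS.1 (by rintro rfl; linarith)
      have key2 : ∀ x, x₀ ≤ x → x < b → h x < x := by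
        intro x hx₀x hxb
        by_contra hcon
        push_neg at hcon
        have hxS : x ∈ Ici x₀ ∩ (fun x => h x - x) ⁻¹' Ici 0 :=
          ⟨hx₀x, by simp only [mem_preimage, mem_Ici]; linarith⟩
        have : b ≤ x := by rw [hbdef]; exact csInf_le hS₂bdd hxS
        linarith
      -- h is concave on (a, b)
      have hcc : ConcaveOn ℝ (Ioo a b) h := by
        apply hconc _ (fun x hx => le_of_lt (lt_of_le_of_lt ha0 hx.1)) ordConnected_Ioo
        intro x hx
        have hx0 : (0 : ℝ) ≤ x := le_of_lt (lt_of_le_of_lt ha0 hx.1)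
        have hxx : h x < x := by
          rcases le_total x x₀ with hcase | hcase
          · exact key1 x hx.1 hcase
          · exact key2 x hcase hx.2
        exact lt_of_lt_of_le hxx (hid_le_f2 x hx0)
      -- v close to b with h v > v - ε
      have hm₂0 : (0 : ℝ) ≤ max x₀ (b - ε) := le_trans hx₀ (le_max_left _ _)
      have hm₂b : max x₀ (b - ε) < b := max_lt hx₀b (by linarith)
      obtain ⟨v, hvIoo, hvh⟩ := near_left h hcont hm₂0 hm₂b hε
      have hx₀v : x₀ < v := lt_of_le_of_lt (le_max_left _ _) hvIoo.1
      have hvb : v < b := hvIoo.2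
      have hbε : b - ε < v := lt_of_le_of_lt (le_max_right _ _) hvIoo.1
      have hv_lb : v - ε < h v := by linarith
      have huD : u ∈ Ioo a b := ⟨hua, hux₀.trans hx₀b⟩
      have hvD : v ∈ Ioo a b := ⟨ha_lt.trans hx₀v, hvb⟩
      have hch := chord hcc huD hvD hux₀ hx₀v
      have hd : (0 : ℝ) < v - u := by linarith
      obtain ⟨lam, hlamdef⟩ : ∃ l : ℝ, l = (v - x₀) / (v - u) := ⟨_, rfl⟩
      obtain ⟨mu, hmudef⟩ : ∃ m : ℝ, m = (x₀ - u) / (v - u) := ⟨_, rfl⟩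
      rw [← hlamdef, ← hmudef] at hch
      have hlam : 0 ≤ lam := hlamdef ▸ div_nonneg (by linarith) hd.le
      have hmu : 0 ≤ mu := hmudef ▸ div_nonneg (by linarith) hd.le
      have hsum : lam + mu = 1 := by rw [hlamdef, hmudef]; field_simp; ring
      have hxeq : lam * u + mu * v = x₀ := by
        rw [hlamdef, hmudef]; field_simp; ring
      have hsumε : lam * ε + mu * ε = ε := by rw [← add_mul, hsum, one_mul]
      have e1 : lam * (u - 2 * ε) ≤ lam * h u := mul_le_mul_of_nonneg_left hu_lb.le hlam
      have e2 : mu * (v - ε) ≤ mu * h v := mul_le_mul_of_nonneg_left hv_lb.le hmu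
      nlinarith [e1, e2, hch, hxeq, hsumε, mul_nonneg hmu hε.le, hlt, hε]
    · -- Case 2: h stays below the identity on [x₀, ∞)
      push_neg at hS2
      have hcc : ConcaveOn ℝ (Ioi a) h := by
        apply hconc _ (fun x hx => le_of_lt (lt_of_le_of_lt ha0 hx)) ordConnected_Ioi
        intro x hx
        have hx0 : (0 : ℝ) ≤ x := le_of_lt (lt_of_le_of_lt ha0 hx)
        have hxx : h x < x := by
          rcases le_total x x₀ with hcase | hcase
          · exact key1 x hx hcase
          · exact hS2 x hcase
        exact lt_of_lt_of_le hxx (hid_le_f2 x hx0)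
      obtain ⟨v, hvdef⟩ : ∃ v : ℝ, v = x₀ + 1 + (x₀ - u) * K / ε := ⟨_, rfl⟩
      have hvpos : 0 < (x₀ - u) * K / ε := div_pos (mul_pos (by linarith) hK) hε
      have hx₀v : x₀ < v := by rw [hvdef]; linarith
      have hv0 : (0 : ℝ) ≤ v := le_trans hx₀ hx₀v.le
      have hv_lb : v - K ≤ h v := le_trans (le_max_left _ _) (hbnd v (mem_Ici.mpr hv0)).1
      have huD : u ∈ Ioi a := hua
      have hvD : v ∈ Ioi a := mem_Ioi.mpr (ha_lt.trans hx₀v)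
      have hch := chord hcc huD hvD hux₀ hx₀v
      have hd : (0 : ℝ) < v - u := by linarith
      obtain ⟨lam, hlamdef⟩ : ∃ l : ℝ, l = (v - x₀) / (v - u) := ⟨_, rfl⟩
      obtain ⟨mu, hmudef⟩ : ∃ m : ℝ, m = (x₀ - u) / (v - u) := ⟨_, rfl⟩
      rw [← hlamdef, ← hmudef] at hch
      have hlam : 0 ≤ lam := hlamdef ▸ div_nonneg (by linarith) hd.le
      have hmu : 0 ≤ mu := hmudef ▸ div_nonneg (by linarith) hd.le
      have hsum : lam + mu = 1 := by rw [hlamdef, hmudef]; field_simp; ring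
      have hxeq : lam * u + mu * v = x₀ := by
        rw [hlamdef, hmudef]; field_simp; ring
      have hsumε : lam * ε + mu * ε = ε := by rw [← add_mul, hsum, one_mul]
      have hmuK : mu * K ≤ ε := by
        have hca : ε * ((x₀ - u) * K / ε) = (x₀ - u) * K := by field_simp
        have hvu : v - u = (x₀ + 1 - u) + (x₀ - u) * K / ε := by rw [hvdef]; ring
        have hexp : ε * (v - u) = ε * (x₀ + 1 - u) + (x₀ - u) * K := by
          rw [hvu, mul_add, hca]
        have hpos : 0 < ε * (x₀ + 1 - u) := mul_pos hε (by linarith)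
        rw [hmudef, div_mul_eq_mul_div, div_le_iff₀ hd]
        linarith [hexp, hpos]
      have e1 : lam * (u - 2 * ε) ≤ lam * h u := mul_le_mul_of_nonneg_left hu_lb.le hlam
      have e2 : mu * (v - K) ≤ mu * h v := mul_le_mul_of_nonneg_left hv_lb hmu
      nlinarith [e1, e2, hch, hxeq, hsumε, hmuK, mul_nonneg hmu hε.le, hlt, hε]
end

section
/- Let K > 0, c ≥ 1 and 0 ≤ Δ < K, and set f₁(x) = (K − x)⁺ and f₂(x) = c·(K − x)⁺ + Δ for x ≥ 0. Then the function g defined by g(x) = K − ((K − Δ)/K)·x for 0 ≤ x < K and g(x) = Δ for x ≥ K belongs to ℍ and satisfies g ≤ h pointwise for every h ∈ ℍ; i.e., g is the minimal element of ℍ. -/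
open Set Filter Topology

lemma chord_concave {s : Set ℝ} {f : ℝ → ℝ} (hf : ConcaveOn ℝ s f) {p q x : ℝ}
    (hp : p ∈ s) (hq : q ∈ s) (hpq : p < q) (hx : x ∈ Set.Icc p q) :
    (q - x) * f p + (x - p) * f q ≤ (q - p) * f x := by
  have hd : (0:ℝ) < q - p := by linarith
  have hα : 0 ≤ (q - x) / (q - p) := div_nonneg (by linarith [hx.2]) hd.le
  have hβ : 0 ≤ (x - p) / (q - p) := div_nonneg (by linarith [hx.1]) hd.le
  have hαβ : (q - x) / (q - p) + (x - p) / (q - p) = 1 := by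
    field_simp
    ring
  have hcomb : ((q - x) / (q - p)) • p + ((x - p) / (q - p)) • q = x := by
    simp only [smul_eq_mul]
    field_simp
    ring
  have h2 := hf.2 hp hq hα hβ hαβ
  rw [hcomb] at h2
  simp only [smul_eq_mul] at h2
  have h3 := mul_le_mul_of_nonneg_left h2 hd.le
  calc (q - x) * f p + (x - p) * f q
      = (q - p) * ((q - x) / (q - p) * f p + (x - p) / (q - p) * f q) := by
        field_simp
    _ ≤ (q - p) * f x := h3

lemma concave_chord_closure {a b : ℝ} (hab : a < b) {f : ℝ → ℝ}
    (hc : ContinuousOn f (Set.Icc a b)) (hconc : ConcaveOn ℝ (Set.Ioo a b) f)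
    {x : ℝ} (hx : x ∈ Set.Icc a b) :
    (b - x) * f a + (x - a) * f b ≤ (b - a) * f x := by
  rcases eq_or_lt_of_le hx.1 with rfl | hax
  · apply le_of_eq; ring
  rcases eq_or_lt_of_le hx.2 with rfl | hxb
  · apply le_of_eq; ring
  -- key inequality for interior points
  have key : ∀ u ∈ Set.Ioc a x, ∀ v ∈ Set.Ico x b,
      (v - x) * f u + (x - u) * f v ≤ (v - u) * f x := by
    intro u hu v hv
    rcases eq_or_lt_of_le hu.2 with rfl | hux
    · apply le_of_eq; ring
    rcases eq_or_lt_of_le hv.1 with rfl | hxv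
    · apply le_of_eq; ring
    exact chord_concave hconc ⟨hu.1, lt_of_le_of_lt hu.2 hxb⟩
      ⟨lt_trans hax hxv, hv.2⟩ (lt_trans hux hxv) ⟨hux.le, hxv.le⟩
  -- limit u → a⁺
  have tendsto_fa : Filter.Tendsto f (𝓝[>] a) (𝓝 (f a)) := by
    have h1 : ContinuousWithinAt f (Set.Icc a b) a := hc a ⟨le_rfl, hab.le⟩
    have h2 : Set.Icc a b ∈ 𝓝[>] a :=
      Filter.mem_of_superset (Ioo_mem_nhdsGT hab) Set.Ioo_subset_Icc_self
    exact (h1.mono_of_mem_nhdsWithin h2)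
  have tendsto_fb : Filter.Tendsto f (𝓝[<] b) (𝓝 (f b)) := by
    have h1 : ContinuousWithinAt f (Set.Icc a b) b := hc b ⟨hab.le, le_rfl⟩
    have h2 : Set.Icc a b ∈ 𝓝[<] b :=
      Filter.mem_of_superset (Ioo_mem_nhdsLT hab) Set.Ioo_subset_Icc_self
    exact (h1.mono_of_mem_nhdsWithin h2)
  have tendsto_idl : Filter.Tendsto (fun u : ℝ => u) (𝓝[>] a) (𝓝 a) :=
    (continuous_id.tendsto a).mono_left nhdsWithin_le_nhds
  have tendsto_idr : Filter.Tendsto (fun v : ℝ => v) (𝓝[<] b) (𝓝 b) :=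
    (continuous_id.tendsto b).mono_left nhdsWithin_le_nhds
  have L1 : ∀ v ∈ Set.Ico x b, (v - x) * f a + (x - a) * f v ≤ (v - a) * f x := by
    intro v hv
    have tend : Filter.Tendsto
        (fun u => (v - u) * f x - ((v - x) * f u + (x - u) * f v)) (𝓝[>] a)
        (𝓝 ((v - a) * f x - ((v - x) * f a + (x - a) * f v))) := by
      apply Filter.Tendsto.sub
      · exact ((tendsto_const_nhds.sub tendsto_idl).mul tendsto_const_nhds)
      · exact ((tendsto_const_nhds.mul tendsto_fa).add
          ((tendsto_const_nhds.sub tendsto_idl).mul tendsto_const_nhds))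
    have hev : ∀ᶠ u in 𝓝[>] a,
        0 ≤ (v - u) * f x - ((v - x) * f u + (x - u) * f v) := by
      filter_upwards [Ioo_mem_nhdsGT hax] with u hu
      have := key u ⟨hu.1, hu.2.le⟩ v hv
      linarith
    have := ge_of_tendsto tend hev
    linarith
  have tend : Filter.Tendsto
      (fun v => (v - a) * f x - ((v - x) * f a + (x - a) * f v)) (𝓝[<] b)
      (𝓝 ((b - a) * f x - ((b - x) * f a + (x - a) * f b))) := by
    apply Filter.Tendsto.sub
    · exact ((tendsto_idr.sub tendsto_const_nhds).mul tendsto_const_nhds)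
    · exact (((tendsto_idr.sub tendsto_const_nhds).mul tendsto_const_nhds).add
        (tendsto_const_nhds.mul tendsto_fb))
  have hev : ∀ᶠ v in 𝓝[<] b,
      0 ≤ (v - a) * f x - ((v - x) * f a + (x - a) * f v) := by
    filter_upwards [Ioo_mem_nhdsLT hxb] with v hv
    have := L1 v ⟨hv.1.le, hv.2⟩
    linarith
  have := ge_of_tendsto tend hev
  linarith

/-- (Put option, `Δ < K`.) For `f₁(x) = (K−x)⁺`, `f₂(x) = c(K−x)⁺ + Δ` with
`K > 0`, `c ≥ 1`, `0 ≤ Δ < K`, the function `g(x) = K − ((K−Δ)/K)x` for `x < K` and `g(x) = Δ`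
for `x ≥ K` is the minimal element of `ℍ`. -/
theorem stmt14 (K c Δ : ℝ) (hK : 0 < K) (hc : 1 ≤ c) (hΔ0 : 0 ≤ Δ) (hΔK : Δ < K) :
    memH (fun x => max (K - x) 0) (fun x => c * max (K - x) 0 + Δ)
      (fun x => if x < K then K - ((K - Δ) / K) * x else Δ) ∧
    ∀ h : ℝ → ℝ, memH (fun x => max (K - x) 0) (fun x => c * max (K - x) 0 + Δ) h →
      ∀ x ∈ Set.Ici (0 : ℝ), (if x < K then K - ((K - Δ) / K) * x else Δ) ≤ h x := by
  have hm0 : 0 ≤ (K - Δ) / K := div_nonneg (by linarith) hK.le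
  have hm1 : (K - Δ) / K ≤ 1 := by rw [div_le_one hK]; linarith
  have hmK : (K - Δ) / K * K = K - Δ := by field_simp
  -- the function in max form
  have hgG : ∀ x : ℝ, (if x < K then K - (K - Δ) / K * x else Δ)
      = max (K - (K - Δ) / K * x) Δ := by
    intro x
    rcases lt_or_ge x K with hx | hx
    · rw [if_pos hx, max_eq_left]
      nlinarith [mul_le_mul_of_nonneg_left hx.le hm0]
    · rw [if_neg (not_lt.2 hx), max_eq_right]
      nlinarith [mul_le_mul_of_nonneg_left hx hm0]
  -- bounds
  have hbound : ∀ x ∈ Set.Ici (0:ℝ),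
      max (K - x) 0 ≤ (if x < K then K - (K - Δ) / K * x else Δ) ∧
      (if x < K then K - (K - Δ) / K * x else Δ) ≤ c * max (K - x) 0 + Δ := by
    intro x hx
    rw [Set.mem_Ici] at hx
    rw [hgG x]
    constructor
    · apply max_le
      · refine le_trans ?_ (le_max_left _ _)
        nlinarith [mul_le_mul_of_nonneg_right hm1 hx]
      · exact le_trans hΔ0 (le_max_right _ _)
    · apply max_le
      · rcases le_total x K with h | h
        · rw [max_eq_left (by linarith)]
          have hmx : (K - Δ) / K * x * K = K * x - Δ * x := by field_simp
          nlinarith [mul_nonneg (mul_nonneg (by linarith : (0:ℝ) ≤ c - 1) hK.le)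
            (by linarith : (0:ℝ) ≤ K - x), mul_le_mul_of_nonneg_left h hΔ0]
        · rw [max_eq_right (by linarith)]
          nlinarith [mul_le_mul_of_nonneg_left h hm0]
      · have : 0 ≤ c * max (K - x) 0 :=
          mul_nonneg (by linarith) (le_max_right _ _)
        linarith
  -- convexity-type inequality for the candidate function (in max form)
  have hGconv : ∀ p q r : ℝ, p ≤ q → q ≤ r →
      (r - p) * max (K - (K - Δ) / K * q) Δ ≤
      (r - q) * max (K - (K - Δ) / K * p) Δ + (q - p) * max (K - (K - Δ) / K * r) Δ := by
    intro p q r hpq hqr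
    rcases le_total (K - (K - Δ) / K * q) Δ with hmq | hmq
    · rw [max_eq_right hmq]
      nlinarith [le_max_right (K - (K - Δ) / K * p) Δ, le_max_right (K - (K - Δ) / K * r) Δ]
    · rw [max_eq_left hmq]
      nlinarith [le_max_left (K - (K - Δ) / K * p) Δ, le_max_left (K - (K - Δ) / K * r) Δ]
  have hmemg : memH (fun x => max (K - x) 0) (fun x => c * max (K - x) 0 + Δ)
      (fun x => if x < K then K - ((K - Δ) / K) * x else Δ) := by
    refine ⟨?_, hbound, ?_⟩
    · have he : (fun x : ℝ => if x < K then K - (K - Δ) / K * x else Δ)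
          = fun x => max (K - (K - Δ) / K * x) Δ := funext hgG
      rw [he]
      exact (Continuous.max (by fun_prop) continuous_const).continuousOn
    · intro D hD0 hDoc hDlt
      have hDK : ∀ x ∈ D, x < K := by
        intro x hx
        by_contra hxK
        push_neg at hxK
        have h1 := hDlt x hx
        simp only [if_neg (not_lt.2 hxK)] at h1
        rw [max_eq_right (by linarith)] at h1
        linarith
      refine ⟨convex_iff_ordConnected.2 hDoc, ?_⟩
      intro x hx y hy α β hα hβ hαβ
      have hxK := hDK x hx
      have hyK := hDK y hy
      have hcomb : α * x + β * y < K := by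
        rcases eq_or_lt_of_le hα with h' | h'
        · have hβ1 : β = 1 := by linarith
          rw [← h', hβ1]; simpa using hyK
        · nlinarith [mul_lt_mul_of_pos_left (sub_pos.2 hxK) h',
            mul_nonneg hβ (sub_pos.2 hyK).le]
      simp only [smul_eq_mul]
      rw [if_pos hxK, if_pos hyK, if_pos hcomb]
      apply le_of_eq
      linear_combination K * hαβ
  refine ⟨hmemg, ?_⟩
  intro h hmemh x₀ hx₀
  rw [Set.mem_Ici] at hx₀
  obtain ⟨hhc, hhb, hhconc⟩ := hmemh
  by_contra hcon
  push_neg at hcon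
  have h0 : K ≤ h 0 := by
    have := (hhb 0 Set.self_mem_Ici).1
    simpa [max_eq_left hK.le] using this
  have hh0 : ∀ x : ℝ, 0 ≤ x → 0 ≤ h x := fun x hx =>
    le_trans (le_max_right _ _) ((hhb x (Set.mem_Ici.2 hx)).1)
  have hx₀f₂ : h x₀ < c * max (K - x₀) 0 + Δ :=
    lt_of_lt_of_le hcon ((hbound x₀ hx₀).2)
  have hx₀pos : 0 < x₀ := by
    rcases (lt_or_eq_of_le hx₀) with h' | h'
    · exact h'
    · exfalso
      rw [← h'] at hcon
      rw [if_pos hK] at hcon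
      simp only [mul_zero, sub_zero] at hcon
      linarith
  rw [hgG x₀] at hcon
  -- left endpoint
  set TL : Set ℝ := insert 0 {x ∈ Set.Icc 0 x₀ | c * max (K - x) 0 + Δ ≤ h x} with hTLdef
  have hF2cont : Continuous (fun x : ℝ => c * max (K - x) 0 + Δ) := by fun_prop
  have hTLclosed : IsClosed TL := by
    rw [hTLdef, Set.insert_eq]
    exact isClosed_singleton.union (isClosed_Icc.isClosed_le hF2cont.continuousOn
      (hhc.mono Set.Icc_subset_Ici_self))
  have hTLne : TL.Nonempty := ⟨0, Set.mem_insert _ _⟩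
  have hTLbdd : BddAbove TL := by
    refine ⟨x₀, ?_⟩
    rintro y (rfl | ⟨⟨_, hy2⟩, _⟩)
    · exact hx₀
    · exact hy2
  set a := sSup TL with hadef
  have haT : a ∈ TL := hTLclosed.csSup_mem hTLne hTLbdd
  have ha0 : 0 ≤ a := le_csSup hTLbdd (Set.mem_insert _ _)
  have hax₀ : a ≤ x₀ := by
    apply csSup_le hTLne
    rintro y (rfl | ⟨⟨_, hy2⟩, _⟩)
    · exact hx₀
    · exact hy2
  have haltx₀ : a < x₀ := by
    rcases lt_or_eq_of_le hax₀ with h' | h'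
    · exact h'
    · exfalso
      rw [h'] at haT
      rcases haT with h'' | ⟨_, h''⟩
      · exact hx₀pos.ne' h''
      · linarith
  have hGa : max (K - (K - Δ) / K * a) Δ ≤ h a := by
    rcases haT with h' | ⟨⟨h1, _⟩, h2⟩
    · rw [h']
      rw [max_eq_left (by nlinarith)]
      simpa using h0
    · refine le_trans ?_ h2
      have := (hbound a h1).2
      rwa [hgG a] at this
  have hΔa : Δ ≤ h a := by
    refine le_trans ?_ hGa
    exact le_max_right _ _
  have hlt_left : ∀ x, a < x → x ≤ x₀ → h x < c * max (K - x) 0 + Δ := by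
    intro x h1 h2
    by_contra h3
    push_neg at h3
    have : x ∈ TL := Set.mem_insert_of_mem _ ⟨⟨by linarith, h2⟩, h3⟩
    have := le_csSup hTLbdd this
    linarith
  -- G is nonincreasing
  have hGmono : max (K - (K - Δ) / K * x₀) Δ ≤ max (K - (K - Δ) / K * a) Δ := by
    apply max_le_max _ le_rfl
    nlinarith [mul_le_mul_of_nonneg_left hax₀ hm0]
  set TR : Set ℝ := {x ∈ Set.Ici x₀ | c * max (K - x) 0 + Δ ≤ h x} with hTRdef
  by_cases hTR : TR.Nonempty
  · -- right endpoint exists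
    have hTRclosed : IsClosed TR :=
      isClosed_Ici.isClosed_le hF2cont.continuousOn
        (hhc.mono (Set.Ici_subset_Ici.2 hx₀))
    have hTRbdd : BddBelow TR := ⟨x₀, fun y hy => hy.1⟩
    set b := sInf TR with hbdef
    have hbT : b ∈ TR := hTRclosed.csInf_mem hTR hTRbdd
    have hx₀b : x₀ ≤ b := Set.mem_Ici.1 hbT.1
    have hx₀ltb : x₀ < b := by
      rcases lt_or_eq_of_le hx₀b with h' | h'
      · exact h'
      · exfalso; rw [← h'] at hbT; linarith [hbT.2]
    have hGb : max (K - (K - Δ) / K * b) Δ ≤ h b := by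
      refine le_trans ?_ hbT.2
      have := (hbound b (le_trans hx₀ hx₀b)).2
      rwa [hgG b] at this
    have hlt_right : ∀ x, x₀ ≤ x → x < b → h x < c * max (K - x) 0 + Δ := by
      intro x h1 h2
      by_contra h3
      push_neg at h3
      have : x ∈ TR := ⟨h1, h3⟩
      have := csInf_le hTRbdd this
      linarith
    have hab : a < b := lt_trans haltx₀ hx₀ltb
    have hconcD : ConcaveOn ℝ (Set.Ioo a b) h := by
      apply hhconc _ (fun x hx => le_trans ha0 hx.1.le) Set.ordConnected_Ioo
      intro x hx
      rcases le_or_gt x x₀ with h' | h'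
      · exact hlt_left x hx.1 h'
      · exact hlt_right x h'.le hx.2
    have hchord := concave_chord_closure hab
      (hhc.mono (fun x hx => le_trans ha0 hx.1)) hconcD ⟨haltx₀.le, hx₀ltb.le⟩
    have hGc := hGconv a x₀ b haltx₀.le hx₀ltb.le
    have e1 := mul_le_mul_of_nonneg_left hGa (by linarith : (0:ℝ) ≤ b - x₀)
    have e2 := mul_le_mul_of_nonneg_left hGb (by linarith : (0:ℝ) ≤ x₀ - a)
    have e3 := mul_lt_mul_of_pos_left hcon (by linarith : (0:ℝ) < b - a)
    linarith [hchord, hGc, e1, e2, e3]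
  · -- h < f₂ on all of [x₀, ∞)
    have hallR : ∀ x, x₀ ≤ x → h x < c * max (K - x) 0 + Δ := by
      intro x hx'
      by_contra h3
      push_neg at h3
      exact hTR ⟨x, Set.mem_Ici.2 hx', h3⟩
    have hconcD : ConcaveOn ℝ (Set.Ioi a) h := by
      apply hhconc _ (fun x hx => le_trans ha0 (le_of_lt hx)) Set.ordConnected_Ioi
      intro x hx
      rcases le_or_gt x x₀ with h' | h'
      · exact hlt_left x hx h'
      · exact hallR x h'.le
    have key2 : ∀ z, x₀ < z → (z - x₀) * h a ≤ (z - a) * h x₀ := by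
      intro z hz
      have haz : a < z := lt_trans haltx₀ hz
      have hsub : ConcaveOn ℝ (Set.Ioo a z) h :=
        hconcD.subset Set.Ioo_subset_Ioi_self (convex_Ioo a z)
      have := concave_chord_closure haz
        (hhc.mono (fun x hx => le_trans ha0 hx.1)) hsub ⟨haltx₀.le, hz.le⟩
      have hz0 : 0 ≤ h z := hh0 z (by linarith)
      nlinarith [mul_nonneg (by linarith : (0:ℝ) ≤ x₀ - a) hz0]
    have hax : h a ≤ h x₀ := by
      by_contra hlt
      push_neg at hlt
      have hd : 0 < h a - h x₀ := by linarith
      set z := max (x₀ + 1) ((x₀ * h a - a * h x₀) / (h a - h x₀) + 1) with hzdef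
      have hz1 : x₀ < z := lt_of_lt_of_le (lt_add_one x₀) (le_max_left _ _)
      have hz2 : (x₀ * h a - a * h x₀) / (h a - h x₀) + 1 ≤ z := le_max_right _ _
      have hk := key2 z hz1
      have hdiv : (x₀ * h a - a * h x₀) / (h a - h x₀) * (h a - h x₀)
          = x₀ * h a - a * h x₀ := div_mul_cancel₀ _ hd.ne'
      nlinarith [mul_le_mul_of_nonneg_right hz2 hd.le]
    have : max (K - (K - Δ) / K * x₀) Δ ≤ h x₀ :=
      le_trans hGmono (le_trans hGa hax)
    linarith
end

section
/- Let K > 0, c ≥ 1 and Δ ≥ K, and set f₁(x) = (K − x)⁺ and f₂(x) = c·(K − x)⁺ + Δ for x ≥ 0. Then the constant function g(x) = K belongs to ℍ and satisfies g ≤ h pointwise for every h ∈ ℍ; i.e., the constant K is the minimal element of ℍ. -/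
/-- Concave function on a set: value at an interior convex combination dominates the combination. -/
lemma concave_middle {D : Set ℝ} {h : ℝ → ℝ} (hc : ConcaveOn ℝ D h) {s t m : ℝ}
    (hs : s ∈ D) (ht : t ∈ D) (h1 : s < m) (h2 : m < t) :
    ((t - m) / (t - s)) * h s + ((m - s) / (t - s)) * h t ≤ h m := by
  have hts : 0 < t - s := by linarith
  have ha : (0:ℝ) ≤ (t - m) / (t - s) := div_nonneg (by linarith) hts.le
  have hb : (0:ℝ) ≤ (m - s) / (t - s) := div_nonneg (by linarith) hts.le
  have hab : (t - m) / (t - s) + (m - s) / (t - s) = 1 := by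
    field_simp; ring
  have key := hc.2 hs ht ha hb hab
  simp only [smul_eq_mul] at key
  have heq : (t - m) / (t - s) * s + (m - s) / (t - s) * t = m := by
    field_simp; ring
  rwa [heq] at key

/-- Find a point just right of `a` where `h` is close to `h a`. -/
lemma exists_near_right {h : ℝ → ℝ} (hcont : ContinuousOn h (Set.Ici 0)) {a w ε : ℝ}
    (ha : 0 ≤ a) (haw : a < w) (hε : 0 < ε) :
    ∃ s, a < s ∧ s < w ∧ h a - ε < h s := by
  have hca : ContinuousWithinAt h (Set.Ici 0) a := hcont a ha
  rw [Metric.continuousWithinAt_iff] at hca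
  obtain ⟨δ, hδ, hδ'⟩ := hca ε hε
  refine ⟨min (a + δ/2) ((a + w)/2), ?_, ?_, ?_⟩
  · exact lt_min (by linarith) (by linarith)
  · exact lt_of_le_of_lt (min_le_right _ _) (by linarith)
  · have hs1 : a < min (a + δ/2) ((a + w)/2) := lt_min (by linarith) (by linarith)
    have hs2 : min (a + δ/2) ((a + w)/2) ≤ a + δ/2 := min_le_left _ _
    have hmem : min (a + δ/2) ((a + w)/2) ∈ Set.Ici (0:ℝ) := le_of_lt (lt_of_le_of_lt ha hs1)
    have hdist : dist (min (a + δ/2) ((a + w)/2)) a < δ := by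
      rw [Real.dist_eq, abs_lt]; constructor <;> linarith
    have := hδ' hmem hdist
    rw [Real.dist_eq, abs_lt] at this
    linarith [this.2]

/-- Find a point just left of `b` where `h` is close to `h b`. -/
lemma exists_near_left {h : ℝ → ℝ} (hcont : ContinuousOn h (Set.Ici 0)) {b w ε : ℝ}
    (hw : 0 ≤ w) (hwb : w < b) (hε : 0 < ε) :
    ∃ t, w < t ∧ t < b ∧ h b - ε < h t := by
  have hb0 : (0:ℝ) ≤ b := le_of_lt (lt_of_le_of_lt hw hwb)
  have hcb : ContinuousWithinAt h (Set.Ici 0) b := hcont b hb0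
  rw [Metric.continuousWithinAt_iff] at hcb
  obtain ⟨δ, hδ, hδ'⟩ := hcb ε hε
  refine ⟨max (b - δ/2) ((w + b)/2), ?_, ?_, ?_⟩
  · exact lt_of_lt_of_le (by linarith) (le_max_right _ _)
  · exact max_lt (by linarith) (by linarith)
  · have ht1 : max (b - δ/2) ((w + b)/2) < b := max_lt (by linarith) (by linarith)
    have ht2 : b - δ/2 ≤ max (b - δ/2) ((w + b)/2) := le_max_left _ _
    have hmem : max (b - δ/2) ((w + b)/2) ∈ Set.Ici (0:ℝ) :=
      le_of_lt (lt_of_le_of_lt hw (lt_of_lt_of_le (by linarith) (le_max_right _ _)))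
    have hdist : dist (max (b - δ/2) ((w + b)/2)) b < δ := by
      rw [Real.dist_eq, abs_lt]; constructor <;> linarith
    have := hδ' hmem hdist
    rw [Real.dist_eq, abs_lt] at this
    linarith [this.2]

/-- (Put option, `Δ ≥ K`.) For `f₁(x) = (K−x)⁺`, `f₂(x) = c(K−x)⁺ + Δ` with
`K > 0`, `c ≥ 1`, `Δ ≥ K`, the constant function `g ≡ K` is the minimal element of `ℍ`. -/
theorem stmt15 (K c Δ : ℝ) (hK : 0 < K) (hc : 1 ≤ c) (hΔK : K ≤ Δ) :
    memH (fun x => max (K - x) 0) (fun x => c * max (K - x) 0 + Δ) (fun _ => K) ∧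
    ∀ h : ℝ → ℝ, memH (fun x => max (K - x) 0) (fun x => c * max (K - x) 0 + Δ) h →
      ∀ x ∈ Set.Ici (0 : ℝ), K ≤ h x := by
  have hf₂ : ∀ x : ℝ, K ≤ c * max (K - x) 0 + Δ := by
    intro x
    have h1 : 0 ≤ max (K - x) 0 := le_max_right _ _
    nlinarith
  constructor
  · refine ⟨continuousOn_const, ?_, ?_⟩
    · intro x hx
      simp only [Set.mem_Ici] at hx
      exact ⟨max_le (by linarith) hK.le, hf₂ x⟩
    · intro D _ hD _
      exact concaveOn_const K hD.convex
  · rintro h ⟨hcont, hbd, hconc⟩ x₀ hx₀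
    simp only [Set.mem_Ici] at hx₀
    by_contra hlt
    push_neg at hlt
    -- h x₀ < K
    have hh0 : K ≤ h 0 := by
      have h1 : max (K - 0) 0 ≤ h 0 := (hbd 0 Set.self_mem_Ici).1
      have h2 : K - 0 ≤ max (K - 0) 0 := le_max_left _ _
      linarith
    have hx₀pos : 0 < x₀ := by
      rcases lt_or_eq_of_le hx₀ with h' | h'
      · exact h'
      · exfalso; rw [← h'] at hlt; linarith
    have hhx₀0 : 0 ≤ h x₀ := by
      have h1 : max (K - x₀) 0 ≤ h x₀ := (hbd x₀ hx₀).1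
      have h2 : (0:ℝ) ≤ max (K - x₀) 0 := le_max_right _ _
      linarith
    -- the last point ≤ x₀ where h ≥ K
    have hScl : IsClosed (Set.Icc 0 x₀ ∩ h ⁻¹' Set.Ici K) :=
      (hcont.mono (fun y hy => hy.1)).preimage_isClosed_of_isClosed isClosed_Icc isClosed_Ici
    have hScpt : IsCompact (Set.Icc 0 x₀ ∩ h ⁻¹' Set.Ici K) :=
      isCompact_Icc.of_isClosed_subset hScl Set.inter_subset_left
    have hSne : (Set.Icc 0 x₀ ∩ h ⁻¹' Set.Ici K).Nonempty := ⟨0, ⟨le_rfl, hx₀⟩, hh0⟩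
    obtain ⟨a, ha⟩ : ∃ a, a = sSup (Set.Icc 0 x₀ ∩ h ⁻¹' Set.Ici K) := ⟨_, rfl⟩
    have haS : a ∈ Set.Icc 0 x₀ ∩ h ⁻¹' Set.Ici K := ha ▸ hScpt.sSup_mem hSne
    have ha0 : 0 ≤ a := haS.1.1
    have haK : K ≤ h a := haS.2
    have hax₀ : a < x₀ := by
      rcases lt_or_eq_of_le haS.1.2 with h' | h'
      · exact h'
      · exfalso; rw [h'] at haK; linarith
    have hbetween : ∀ y, a < y → y ≤ x₀ → h y < K := by
      intro y hy1 hy2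
      by_contra hge
      push_neg at hge
      have hmem : y ∈ Set.Icc 0 x₀ ∩ h ⁻¹' Set.Ici K := ⟨⟨by linarith, hy2⟩, hge⟩
      have := le_csSup hScpt.bddAbove hmem
      rw [← ha] at this
      linarith
    by_cases hcase : ∃ u, x₀ < u ∧ K ≤ h u
    · -- Case 1: h comes back to K at some u > x₀
      obtain ⟨u, hu1, hu2⟩ := hcase
      have hTcl : IsClosed (Set.Icc x₀ u ∩ h ⁻¹' Set.Ici K) :=
        (hcont.mono (fun y hy => le_trans hx₀ hy.1)).preimage_isClosed_of_isClosed
          isClosed_Icc isClosed_Ici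
      have hTcpt : IsCompact (Set.Icc x₀ u ∩ h ⁻¹' Set.Ici K) :=
        isCompact_Icc.of_isClosed_subset hTcl Set.inter_subset_left
      have hTne : (Set.Icc x₀ u ∩ h ⁻¹' Set.Ici K).Nonempty := ⟨u, ⟨hu1.le, le_rfl⟩, hu2⟩
      obtain ⟨b, hbdef⟩ : ∃ b, b = sInf (Set.Icc x₀ u ∩ h ⁻¹' Set.Ici K) := ⟨_, rfl⟩
      have hbT : b ∈ Set.Icc x₀ u ∩ h ⁻¹' Set.Ici K := hbdef ▸ hTcpt.sInf_mem hTne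
      have hbK : K ≤ h b := hbT.2
      have hx₀b : x₀ < b := by
        rcases lt_or_eq_of_le hbT.1.1 with h' | h'
        · exact h'
        · exfalso; rw [← h'] at hbK; linarith
      have hbetween2 : ∀ y, x₀ ≤ y → y < b → h y < K := by
        intro y hy1 hy2
        by_contra hge
        push_neg at hge
        have hyu : y ≤ u := le_trans hy2.le hbT.1.2
        have hmem : y ∈ Set.Icc x₀ u ∩ h ⁻¹' Set.Ici K := ⟨⟨hy1, hyu⟩, hge⟩
        have := csInf_le hTcpt.bddBelow hmem
        rw [← hbdef] at this
        linarith
      -- D = Ioo a b, h < K ≤ f₂ on D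
      have hltK : ∀ y ∈ Set.Ioo a b, h y < K := by
        rintro y ⟨hy1, hy2⟩
        rcases le_or_gt y x₀ with h' | h'
        · exact hbetween y hy1 h'
        · exact hbetween2 y h'.le hy2
      have hDconc : ConcaveOn ℝ (Set.Ioo a b) h := by
        apply hconc
        · intro y hy; exact le_of_lt (lt_of_le_of_lt ha0 hy.1)
        · exact Set.ordConnected_Ioo
        · intro y hy; exact lt_of_lt_of_le (hltK y hy) (hf₂ y)
      -- pick s near a, t near b where h > K - ε
      obtain ⟨ε, hε⟩ : ∃ ε, ε = (K - h x₀) / 2 := ⟨_, rfl⟩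
      have hεpos : 0 < ε := by rw [hε]; linarith
      obtain ⟨s, hs1, hs2, hs3⟩ := exists_near_right hcont ha0 hax₀ hεpos
      obtain ⟨t, ht1, ht2, ht3⟩ := exists_near_left hcont hx₀ hx₀b hεpos
      have hsK : K - ε < h s := by linarith
      have htK : K - ε < h t := by linarith
      have hsD : s ∈ Set.Ioo a b := ⟨hs1, by linarith⟩
      have htD : t ∈ Set.Ioo a b := ⟨by linarith, ht2⟩
      have hmid := concave_middle hDconc hsD htD hs2 ht1
      have hts : 0 < t - s := by linarith
      have hA : (0:ℝ) < (t - x₀) / (t - s) := div_pos (by linarith) hts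
      have hB : (0:ℝ) < (x₀ - s) / (t - s) := div_pos (by linarith) hts
      have hAB : (t - x₀) / (t - s) + (x₀ - s) / (t - s) = 1 := by field_simp; ring
      have hA' := mul_lt_mul_of_pos_left hsK hA
      have hB' := mul_lt_mul_of_pos_left htK hB
      have hsum : ((t - x₀) / (t - s)) * (K - ε) + ((x₀ - s) / (t - s)) * (K - ε) = K - ε := by
        rw [← add_mul, hAB, one_mul]
      linarith
    · -- Case 2: h < K for all u > x₀; concave on Ioi a, bounded below by 0 → contradiction
      push_neg at hcase
      have hltK : ∀ y ∈ Set.Ioi a, h y < K := by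
        intro y hy
        rcases le_or_gt y x₀ with h' | h'
        · exact hbetween y hy h'
        · exact hcase y h'
      have hDconc : ConcaveOn ℝ (Set.Ioi a) h := by
        apply hconc
        · intro y hy; exact le_of_lt (lt_of_le_of_lt ha0 hy)
        · exact Set.ordConnected_Ioi
        · intro y hy; exact lt_of_lt_of_le (hltK y hy) (hf₂ y)
      obtain ⟨ε, hε⟩ : ∃ ε, ε = (K - h x₀) / 2 := ⟨_, rfl⟩
      have hεpos : 0 < ε := by rw [hε]; linarith
      obtain ⟨s, hs1, hs2, hs3⟩ := exists_near_right hcont ha0 hax₀ hεpos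
      have hsx : h x₀ < h s := by linarith
      have hdpos : 0 < h s - h x₀ := by linarith
      have hx₀s : 0 < x₀ - s := by linarith
      obtain ⟨u, hu⟩ : ∃ u, u = x₀ + (x₀ - s) * (h x₀ + 1) / (h s - h x₀) := ⟨_, rfl⟩
      have huu : x₀ < u := by
        rw [hu]
        have : 0 < (x₀ - s) * (h x₀ + 1) / (h s - h x₀) := by positivity
        linarith
      have hsD : s ∈ Set.Ioi a := hs1
      have huD : u ∈ Set.Ioi a := Set.mem_Ioi.mpr (by linarith)
      have hmid := concave_middle hDconc hsD huD hs2 huu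
      have hhu0 : 0 ≤ h u := by
        have h1 : max (K - u) 0 ≤ h u := (hbd u (by simp only [Set.mem_Ici]; linarith)).1
        have h2 : (0:ℝ) ≤ max (K - u) 0 := le_max_right _ _
        linarith
      have hus : 0 < u - s := by linarith
      have h1 := mul_le_mul_of_nonneg_left hmid hus.le
      have heq : (u - s) * ((u - x₀) / (u - s) * h s + (x₀ - s) / (u - s) * h u)
          = (u - x₀) * h s + (x₀ - s) * h u := by
        field_simp
      rw [heq] at h1
      -- h1 : (u - x₀) * h s + (x₀ - s) * h u ≤ (u - s) * h x₀
      have h3 : (u - x₀) * (h s - h x₀) = (x₀ - s) * (h x₀ + 1) := by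
        rw [hu]
        field_simp
        ring
      have hfin : (x₀ - s) * (1 + h u) ≤ 0 := by nlinarith [h1, h3]
      nlinarith [mul_pos hx₀s (show (0:ℝ) < 1 + h u by linarith)]
end

section
/- Let f₁, f₂ : (0,∞) → [0,∞) be continuous with f₁ ≤ f₂, let g : (0,∞) → ℝ be continuous with f₁ ≤ g ≤ f₂, and let x₀ > 0 with g(x₀) < f₂(x₀). Let K = (a, b) be the connected component of the open set {x > 0 : g(x) < f₂(x)} containing x₀, assume g is concave on K, let δ := ∂₊g(x₀) be the right derivative of g at x₀, and assume g(x₀) − x₀·δ ≥ 0. Let T > 0, let S : [0,T] → (0,∞) be continuous with S(0) = x₀, let B : [0,T] → [1,∞) be nondecreasing with B(0) = 1, and set σ := min(T, inf{t ∈ [0,T] : S(t) ∉ K}). Then for every t ∈ [0,T]: B(min(t,σ))·(g(x₀) − x₀·δ) + δ·S(min(t,σ)) ≥ f₂(S(σ)) if σ < t, and B(min(t,σ))·(g(x₀) − x₀·δ) + δ·S(min(t,σ)) ≥ f₁(S(t)) if t ≤ σ. -/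
/-- Pathwise super-replication property of the trivial buy-and-hold hedging
strategy for a game option with payoffs `f₁` (buyer) and `f₂` (seller): with `K` the connected
component of `{x > 0 : g(x) < f₂(x)}` containing `x₀`, `g` concave on `K`, `δ := ∂₊g(x₀)`,
`g(x₀) − x₀δ ≥ 0`, `S` a continuous positive path with `S(0) = x₀`, `B ≥ 1` nondecreasing with
`B(0) = 1`, and `σ := min(T, inf{t ∈ [0,T] : S(t) ∉ K})`, for every `t ∈ [0,T]` the portfolio
value `B(t∧σ)(g(x₀) − x₀δ) + δ·S(t∧σ)` dominates `f₂(S(σ))` if `σ < t` and `f₁(S(t))` if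
`t ≤ σ`. -/
theorem stmt17 (f₁ f₂ g : ℝ → ℝ)
    (hf₁cont : ContinuousOn f₁ (Set.Ioi 0)) (hf₂cont : ContinuousOn f₂ (Set.Ioi 0))
    (hf₁nonneg : ∀ x ∈ Set.Ioi (0 : ℝ), 0 ≤ f₁ x)
    (hf₂nonneg : ∀ x ∈ Set.Ioi (0 : ℝ), 0 ≤ f₂ x)
    (hle : ∀ x ∈ Set.Ioi (0 : ℝ), f₁ x ≤ f₂ x)
    (hgcont : ContinuousOn g (Set.Ioi 0))
    (hg₁ : ∀ x ∈ Set.Ioi (0 : ℝ), f₁ x ≤ g x) (hg₂ : ∀ x ∈ Set.Ioi (0 : ℝ), g x ≤ f₂ x)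
    (x₀ : ℝ) (hx₀ : 0 < x₀) (hgx₀ : g x₀ < f₂ x₀)
    (K : Set ℝ) (hK : K = connectedComponentIn {x : ℝ | 0 < x ∧ g x < f₂ x} x₀)
    (hgconc : ConcaveOn ℝ K g)
    (δ : ℝ) (hδ : HasDerivWithinAt g δ (Set.Ioi x₀) x₀)
    (hδ0 : 0 ≤ g x₀ - x₀ * δ)
    (T : ℝ) (hT : 0 < T)
    (S : ℝ → ℝ) (hScont : ContinuousOn S (Set.Icc 0 T))
    (hSpos : ∀ t ∈ Set.Icc (0 : ℝ) T, 0 < S t) (hS0 : S 0 = x₀)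
    (B : ℝ → ℝ) (hBmono : MonotoneOn B (Set.Icc 0 T))
    (hB1 : ∀ t ∈ Set.Icc (0 : ℝ) T, 1 ≤ B t) (hB0 : B 0 = 1)
    (σ : ℝ) (hσ : σ = sInf ({t : ℝ | t ∈ Set.Icc 0 T ∧ S t ∉ K} ∪ {T})) :
    ∀ t ∈ Set.Icc (0 : ℝ) T,
      (σ < t → f₂ (S σ) ≤ B (min t σ) * (g x₀ - x₀ * δ) + δ * S (min t σ)) ∧
      (t ≤ σ → f₁ (S t) ≤ B (min t σ) * (g x₀ - x₀ * δ) + δ * S (min t σ)) := by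
  set U : Set ℝ := {x : ℝ | 0 < x ∧ g x < f₂ x} with hU
  -- U is open
  have hUopen : IsOpen U := by
    have h1 : IsOpen (Set.Ioi (0 : ℝ) ∩ (fun x => f₂ x - g x) ⁻¹' Set.Ioi 0) :=
      (hf₂cont.sub hgcont).isOpen_inter_preimage isOpen_Ioi isOpen_Ioi
    have h2 : U = Set.Ioi (0 : ℝ) ∩ (fun x => f₂ x - g x) ⁻¹' Set.Ioi 0 := by
      ext x; simp [hU, Set.mem_Ioi, sub_pos, and_comm]
    rw [h2]; exact h1
  have hx₀U : x₀ ∈ U := ⟨hx₀, hgx₀⟩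
  have hKopen : IsOpen K := hK ▸ hUopen.connectedComponentIn
  have hx₀K : x₀ ∈ K := hK ▸ mem_connectedComponentIn hx₀U
  have hKU : K ⊆ U := hK ▸ connectedComponentIn_subset U x₀
  have hKpos : ∀ y ∈ K, (0 : ℝ) < y := fun y hy => (hKU hy).1
  -- tangent line inequality on K
  have tangent : ∀ y ∈ K, g y ≤ g x₀ + δ * (y - x₀) := by
    intro y hy
    rcases lt_trichotomy y x₀ with h | h | h
    · -- left of x₀ : use limit of slopes from the right
      have htend : Filter.Tendsto (slope g x₀) (nhdsWithin x₀ (Set.Ioi x₀)) (nhds δ) :=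
        (hasDerivWithinAt_iff_tendsto_slope' (Set.notMem_Ioi_self)).mp hδ
      have hslope : δ ≤ slope g x₀ y := by
        refine le_of_tendsto htend ?_
        have hKmem : ∀ᶠ z in nhdsWithin x₀ (Set.Ioi x₀), z ∈ K :=
          Filter.Eventually.filter_mono nhdsWithin_le_nhds
            (hKopen.mem_nhds hx₀K)
        filter_upwards [hKmem, self_mem_nhdsWithin] with z hzK hzgt
        have hanti := hgconc.slope_anti hx₀K
        exact hanti ⟨hy, fun hc => absurd hc (ne_of_lt h)⟩
          ⟨hzK, fun hc => absurd hc (ne_of_gt hzgt)⟩ (le_of_lt (h.trans hzgt))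
      rw [slope_def_field] at hslope
      have hneg : y - x₀ < 0 := by linarith
      have := (le_div_iff_of_neg hneg).mp hslope
      linarith
    · rw [h]; simp
    · have hslope := hgconc.slope_le_of_hasDerivWithinAt_Ioi hx₀K hy h hδ
      rw [slope_def_field] at hslope
      have hpos : (0 : ℝ) < y - x₀ := by linarith
      have := (div_le_iff₀ hpos).mp hslope
      linarith
  -- tangent line inequality on closure of K, at positive points
  have tangentCl : ∀ y ∈ closure K, 0 < y → g y ≤ g x₀ + δ * (y - x₀) := by
    intro y hyc hypos
    have hgat : ContinuousAt g y := hgcont.continuousAt (Ioi_mem_nhds hypos)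
    have hne : (nhdsWithin y K).NeBot := mem_closure_iff_nhdsWithin_neBot.mp hyc
    have h1 : Filter.Tendsto g (nhdsWithin y K) (nhds (g y)) :=
      hgat.tendsto.mono_left nhdsWithin_le_nhds
    have h2 : Filter.Tendsto (fun z => g x₀ + δ * (z - x₀)) (nhdsWithin y K)
        (nhds (g x₀ + δ * (y - x₀))) := by
      exact (Continuous.tendsto (by continuity) y).mono_left nhdsWithin_le_nhds
    refine le_of_tendsto_of_tendsto h1 h2 ?_
    exact eventually_nhdsWithin_of_forall fun z hz => tangent z hz
  -- boundary points of K (positive, not in K) satisfy f₂ ≤ g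
  have boundary : ∀ y ∈ closure K, y ∉ K → 0 < y → f₂ y ≤ g y := by
    intro y hyc hyK hypos
    by_contra hcon
    push_neg at hcon
    have hyU : y ∈ U := ⟨hypos, hcon⟩
    have hyComp : y ∈ connectedComponentIn U y := mem_connectedComponentIn hyU
    have hopen : IsOpen (connectedComponentIn U y) := hUopen.connectedComponentIn
    obtain ⟨z, hz1, hz2⟩ := (mem_closure_iff.mp hyc) _ hopen hyComp
    have e1 : connectedComponentIn U y = connectedComponentIn U z :=
      connectedComponentIn_eq hz1
    have e2 : connectedComponentIn U x₀ = connectedComponentIn U z :=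
      connectedComponentIn_eq (hK ▸ hz2)
    exact hyK (by rw [hK, e2, ← e1]; exact hyComp)
  -- facts about σ
  set A : Set ℝ := {t : ℝ | t ∈ Set.Icc 0 T ∧ S t ∉ K} ∪ {T} with hA
  have hAne : A.Nonempty := ⟨T, Or.inr rfl⟩
  have hAbdd : BddBelow A := by
    refine ⟨0, fun t ht => ?_⟩
    rcases ht with h | h
    · exact h.1.1
    · simp only [Set.mem_singleton_iff] at h; rw [h]; exact hT.le
  have hσT : σ ≤ T := hσ ▸ csInf_le hAbdd (Or.inr rfl)
  have hσ0 : 0 ≤ σ := by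
    rw [hσ]
    refine le_csInf hAne fun t ht => ?_
    rcases ht with h | h
    · exact h.1.1
    · simp only [Set.mem_singleton_iff] at h; rw [h]; exact hT.le
  have hAclosed : IsClosed A := by
    have h1 : IsClosed (Set.Icc (0:ℝ) T ∩ S ⁻¹' Kᶜ) :=
      hScont.preimage_isClosed_of_isClosed isClosed_Icc hKopen.isClosed_compl
    have h2 : {t : ℝ | t ∈ Set.Icc 0 T ∧ S t ∉ K} = Set.Icc (0:ℝ) T ∩ S ⁻¹' Kᶜ := rfl
    rw [hA, h2]
    exact h1.union isClosed_singleton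
  have hσA : σ ∈ A := hσ ▸ hAclosed.csInf_mem hAne hAbdd
  have hbefore : ∀ s : ℝ, 0 ≤ s → s < σ → S s ∈ K := by
    intro s hs0 hsσ
    by_contra hc
    have : s ∈ A := Or.inl ⟨⟨hs0, hsσ.le.trans hσT⟩, hc⟩
    have : σ ≤ s := hσ ▸ csInf_le hAbdd this
    linarith
  have hScl : ∀ t : ℝ, 0 ≤ t → t ≤ σ → S t ∈ closure K := by
    intro t ht0 htσ
    rcases lt_or_eq_of_le htσ with h | h
    · exact subset_closure (hbefore t ht0 h)
    · subst h
      rcases eq_or_lt_of_le ht0 with h0 | h0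
      · rw [← h0]; exact subset_closure (hS0 ▸ hx₀K)
      · have hmem : t ∈ closure (Set.Ico 0 t) := by
          rw [closure_Ico (ne_of_lt h0)]
          exact Set.right_mem_Icc.mpr ht0
        have hcw : ContinuousWithinAt S (Set.Ico 0 t) t :=
          (hScont t ⟨ht0, htσ.trans hσT⟩).mono
            (fun s hs => ⟨hs.1, hs.2.le.trans (htσ.trans hσT)⟩)
        have himg : S t ∈ closure (S '' Set.Ico 0 t) := hcw.mem_closure_image hmem
        refine closure_mono ?_ himg
        rintro _ ⟨s, hs, rfl⟩
        exact hbefore s hs.1 (lt_of_lt_of_le hs.2 htσ)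
  -- main proof
  intro t ht
  constructor
  · -- case σ < t : the seller's payoff at σ
    intro hσt
    have hσIcc : σ ∈ Set.Icc (0:ℝ) T := ⟨hσ0, hσT⟩
    have hSσpos : 0 < S σ := hSpos σ hσIcc
    have hσltT : σ < T := lt_of_lt_of_le hσt ht.2
    have hSσK : S σ ∉ K := by
      rcases hσA with h | h
      · exact h.2
      · simp only [Set.mem_singleton_iff] at h; exact absurd h (ne_of_lt hσltT)
    have hSσcl : S σ ∈ closure K := hScl σ hσ0 le_rfl
    have h1 : f₂ (S σ) ≤ g (S σ) := boundary _ hSσcl hSσK hSσpos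
    have h2 : g (S σ) ≤ g x₀ + δ * (S σ - x₀) := tangentCl _ hSσcl hSσpos
    have hmin : min t σ = σ := min_eq_right hσt.le
    rw [hmin]
    have h3 : (g x₀ - x₀ * δ) ≤ B σ * (g x₀ - x₀ * δ) :=
      le_mul_of_one_le_left hδ0 (hB1 σ hσIcc)
    nlinarith
  · -- case t ≤ σ : the buyer's payoff at t
    intro htσ
    have hStpos : 0 < S t := hSpos t ht
    have hStcl : S t ∈ closure K := hScl t ht.1 htσ
    have h1 : f₁ (S t) ≤ g (S t) := hg₁ _ hStpos
    have h2 : g (S t) ≤ g x₀ + δ * (S t - x₀) := tangentCl _ hStcl hStpos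
    have hmin : min t σ = t := min_eq_left htσ
    rw [hmin]
    have h3 : (g x₀ - x₀ * δ) ≤ B t * (g x₀ - x₀ * δ) :=
      le_mul_of_one_le_left hδ0 (hB1 t ht)
    nlinarith
end
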